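/- arXiv:math/0612603 — 5 statements merged into one kernel-verified Lean document; each statement's English description precedes it below -/
import Mathlib

section
/- The set-theoretic difference between the closure of 𝒰 and 𝒰 itself is countably infinite. -/
/-- `c` is a `q`-expansion: a sequence of nonnegative integers with `c i ≤ q`
(we index from 0, so `c i` stands for the digit `c_{i+1}` of the paper)
such that `∑_{i≥1} c_i q^{-i} = 1`. -/
def IsExpansion (q : ℝ) (c : ℕ → ℕ) : Prop :=
  (∀ i, (c i : ℝ) ≤ q) ∧ ∑' i : ℕ, (c i : ℝ) / q ^ (i + 1) = 1

/-- The set `𝒰` of univoque numbers: real numbers `q ≥ 1` admitting exactly one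
`q`-expansion. -/
def UnivoqueSet : Set ℝ := {q | 1 ≤ q ∧ ∃! c : ℕ → ℕ, IsExpansion q c}

/-- `γ` is the greedy `q`-expansion: for every `n`, `γ n` is the largest
nonnegative integer `k` such that `(∑_{i<n} γ i / q^(i+1)) + k / q^(n+1) ≤ 1`. -/
def IsGreedy (q : ℝ) (γ : ℕ → ℕ) : Prop :=
  ∀ n : ℕ, IsGreatest
    {k : ℕ | (∑ i ∈ Finset.range n, (γ i : ℝ) / q ^ (i + 1)) + (k : ℝ) / q ^ (n + 1) ≤ 1} (γ n)

/-- `α` is the quasi-greedy `q`-expansion: for every `n`, `α n` is the largest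
nonnegative integer `k` such that `(∑_{i<n} α i / q^(i+1)) + k / q^(n+1) < 1`. -/
def IsQuasiGreedy (q : ℝ) (α : ℕ → ℕ) : Prop :=
  ∀ n : ℕ, IsGreatest
    {k : ℕ | (∑ i ∈ Finset.range n, (α i : ℝ) / q ^ (i + 1)) + (k : ℝ) / q ^ (n + 1) < 1} (α n)

/-- Strict lexicographic order on sequences of nonnegative integers. -/
def LexLT (a b : ℕ → ℕ) : Prop := ∃ n : ℕ, (∀ i < n, a i = b i) ∧ a n < b n

/-- Lexicographic order on sequences of nonnegative integers. -/
def LexLE (a b : ℕ → ℕ) : Prop := LexLT a b ∨ a = b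

/-- Strict lexicographic order on finite words of length `n`
(given as functions on the first `n` indices). -/
def WordLT (n : ℕ) (a b : ℕ → ℕ) : Prop := ∃ i < n, (∀ j < i, a j = b j) ∧ a i < b i


section
open Filter Topology

namespace UnivoqueAux

/-- value of a digit word in base `q` -/
noncomputable def val (q : ℝ) (c : ℕ → ℕ) : ℝ := ∑' i : ℕ, (c i : ℝ) / q ^ (i + 1)

/-- value of the shifted word -/
noncomputable def tval (q : ℝ) (c : ℕ → ℕ) (n : ℕ) : ℝ := val q (fun i => c (n + i))

variable {q : ℝ} {c : ℕ → ℕ} {M : ℕ}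

lemma summable_word (hq : 1 < q) {B : ℝ} (hc : ∀ i, (c i : ℝ) ≤ B) :
    Summable (fun i : ℕ => (c i : ℝ) / q ^ (i + 1)) := by
  have h0 : 0 < q := lt_trans one_pos hq
  have hr : (1:ℝ)/q < 1 := by rw [div_lt_one h0]; exact hq
  have hr0 : (0:ℝ) ≤ 1/q := by positivity
  have hgeom : Summable (fun i : ℕ => B * (1/q) ^ (i+1)) := by
    apply Summable.mul_left
    exact ((summable_geometric_of_lt_one hr0 hr).comp_injective (add_left_injective 1))
  refine Summable.of_nonneg_of_le (fun i => by positivity) (fun i => ?_) hgeom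
  have : (c i : ℝ) / q ^ (i+1) ≤ B / q ^ (i+1) := by
    apply div_le_div_of_nonneg_right ?_ (by positivity)
    · exact hc i
  calc (c i : ℝ) / q ^ (i+1) ≤ B / q^(i+1) := this
    _ = B * (1/q)^(i+1) := by rw [one_div, inv_pow]; ring

lemma tsum_const_div (hq : 1 < q) (B : ℝ) :
    ∑' i : ℕ, B / q ^ (i + 1) = B / (q - 1) := by
  have h0 : 0 < q := lt_trans one_pos hq
  have hr : (1:ℝ)/q < 1 := by rw [div_lt_one h0]; exact hq
  have hr0 : (0:ℝ) ≤ 1/q := by positivity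
  have h1 : ∑' i : ℕ, ((1/q) ^ i) = (1 - 1/q)⁻¹ := tsum_geometric_of_lt_one hr0 hr
  have : ∀ i : ℕ, B / q ^ (i+1) = (B/q) * (1/q)^i := by
    intro i
    rw [pow_succ]
    field_simp
    rw [one_div, inv_pow, mul_assoc, mul_inv_cancel₀ (pow_ne_zero _ h0.ne'), mul_one]
  rw [tsum_congr this, tsum_mul_left, h1]
  have hq1 : q - 1 ≠ 0 := by intro h; linarith [sub_eq_zero.mp h]
  rw [eq_div_iff hq1]
  have hq0 : q ≠ 0 := ne_of_gt h0
  field_simp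

end UnivoqueAux

namespace UnivoqueAux2
open UnivoqueAux
variable {q : ℝ} {c a b : ℕ → ℕ} {M : ℕ}

lemma val_split (hq : 1 < q) {B : ℝ} (hc : ∀ i, (c i : ℝ) ≤ B) (n : ℕ) :
    val q c = (∑ i ∈ Finset.range n, (c i : ℝ) / q ^ (i + 1)) + tval q c n / q ^ n := by
  have hs := summable_word hq hc
  have h := hs.sum_add_tsum_nat_add n
  rw [val, ← h]
  congr 1
  have : ∀ i : ℕ, (c (i + n) : ℝ) / q ^ (i + n + 1) = ((c (n + i) : ℝ) / q ^ (i+1)) / q ^ n := by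
    intro i
    rw [Nat.add_comm i n]
    rw [div_div, ← pow_add]
    congr 2
    omega
  rw [tsum_congr this, tval, val, tsum_div_const]

lemma tval_nonneg (n : ℕ) (hq : 0 < q) : 0 ≤ tval q c n := by
  apply tsum_nonneg
  intro i; positivity

lemma tval_le (hq : 1 < q) (hc : ∀ i, (c i : ℝ) ≤ (M : ℝ)) (n : ℕ) :
    tval q c n ≤ (M : ℝ) / (q - 1) := by
  rw [← tsum_const_div hq (M:ℝ)]
  apply Summable.tsum_le_tsum _ (summable_word hq (fun i => hc (n+i)))
    (summable_word hq (c := fun _ => M) (fun _ => le_refl _))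
  intro i
  apply div_le_div_of_nonneg_right (hc (n+i)) (by positivity)

lemma tval_split_one (hq : 1 < q) {B : ℝ} (hc : ∀ i, (c i : ℝ) ≤ B) (n : ℕ) :
    tval q c n = (c n : ℝ) / q + tval q c (n + 1) / q := by
  have h := val_split (c := fun i => c (n + i)) hq (fun i => hc (n+i)) 1
  rw [tval, h]
  simp only [Finset.range_one, Finset.sum_singleton, pow_one]
  congr 2
  · norm_num
  · rw [tval, tval]
    congr 1
    funext i
    have h' : n + (1 + i) = n + 1 + i := by omega
    rw [h']

/-- if two words with equal value agree below `k`, the digit+tail quantities at `k` agree -/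
lemma prefix_eq (hq : 1 < q) {B : ℝ} (ha : ∀ i, (a i : ℝ) ≤ B) (hb : ∀ i, (b i : ℝ) ≤ B)
    (hval : val q a = val q b) (k : ℕ) (hpre : ∀ i < k, a i = b i) :
    (a k : ℝ) + tval q a (k + 1) = (b k : ℝ) + tval q b (k + 1) := by
  have h0 : 0 < q := lt_trans one_pos hq
  have hsa := val_split hq ha k
  have hsb := val_split hq hb k
  have hsum : (∑ i ∈ Finset.range k, (a i : ℝ) / q ^ (i + 1))
      = ∑ i ∈ Finset.range k, (b i : ℝ) / q ^ (i + 1) := by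
    apply Finset.sum_congr rfl
    intro i hi
    rw [hpre i (Finset.mem_range.mp hi)]
  have htv : tval q a k = tval q b k := by
    have hpow : (0:ℝ) < q ^ k := by positivity
    have := hsa.symm.trans (hval.trans hsb)
    rw [hsum] at this
    have h2 : tval q a k / q ^ k = tval q b k / q ^ k := by linarith
    field_simp at h2
    exact h2
  have h1 := tval_split_one hq ha k
  have h2 := tval_split_one hq hb k
  rw [h1, h2] at htv
  have hqne : q ≠ 0 := ne_of_gt h0
  field_simp at htv
  linarith

lemma first_diff (h : a ≠ b) : ∃ k, (∀ i < k, a i = b i) ∧ a k ≠ b k := by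
  have : ∃ n, a n ≠ b n := by
    by_contra hc
    push_neg at hc
    exact h (funext hc)
  classical
  refine ⟨Nat.find this, fun i hi => ?_, Nat.find_spec this⟩
  by_contra hne
  exact absurd hi (not_lt.mpr (Nat.find_le hne))

end UnivoqueAux2

namespace UnivoqueAux3
open UnivoqueAux UnivoqueAux2

variable {q : ℝ} {c d : ℕ → ℕ} {M : ℕ}

lemma isExpansion_iff : IsExpansion q c ↔ (∀ i, (c i : ℝ) ≤ q) ∧ val q c = 1 := Iff.rfl

lemma digits_le (hqM : q < (M : ℝ) + 1) (h : ∀ i, (c i : ℝ) ≤ q) : ∀ i, c i ≤ M := by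
  intro i
  have : (c i : ℝ) < (M : ℝ) + 1 := lt_of_le_of_lt (h i) hqM
  exact_mod_cast Nat.lt_succ_iff.mp (by exact_mod_cast this)

lemma unique_of_GL (hq1 : 1 < q) (hqM : q < (M : ℝ) + 1)
    (hdig : ∀ i, c i ≤ M) (hval : val q c = 1)
    (hG : ∀ n, c n < M → tval q c (n + 1) < 1)
    (hL : ∀ n, 0 < c n → (M : ℝ) / (q - 1) - 1 < tval q c (n + 1)) :
    ∀ d, IsExpansion q d → d = c := by
  intro d hd
  by_contra hne
  obtain ⟨k, hpre, hk⟩ := first_diff hne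
  have hddig : ∀ i, d i ≤ M := digits_le hqM hd.1
  have hcB : ∀ i, (c i : ℝ) ≤ (M : ℝ) := fun i => Nat.cast_le.mpr (hdig i)
  have hdB : ∀ i, (d i : ℝ) ≤ (M : ℝ) := fun i => Nat.cast_le.mpr (hddig i)
  have hid := prefix_eq hq1 hdB hcB (hd.2.trans hval.symm) k hpre
  rcases lt_or_gt_of_ne hk with hlt | hgt
  · -- d k < c k : lazy violation
    have hck : 0 < c k := Nat.pos_of_ne_zero (by omega)
    have h1 : (1 : ℝ) ≤ (c k : ℝ) - (d k : ℝ) := by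
      have : d k + 1 ≤ c k := hlt
      have := Nat.cast_le (α := ℝ).mpr this
      push_cast at this
      linarith
    have h2 := hL k hck
    have h3 := tval_le hq1 hdB (k + 1)
    linarith
  · -- c k < d k : greedy violation
    have hckM : c k < M := lt_of_lt_of_le hgt (hddig k)
    have h1 : (1 : ℝ) ≤ (d k : ℝ) - (c k : ℝ) := by
      have : c k + 1 ≤ d k := hgt
      have := Nat.cast_le (α := ℝ).mpr this
      push_cast at this
      linarith
    have h2 := hG k hckM
    have h3 := tval_nonneg (c := d) (k + 1) (lt_trans one_pos hq1)
    linarith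

end UnivoqueAux3

namespace UnivoqueAux4
open UnivoqueAux UnivoqueAux2 UnivoqueAux3

noncomputable def gdig (q : ℝ) (M : ℕ) (y : ℝ) : ℕ := min M ⌊q * y⌋₊

noncomputable def grem (q : ℝ) (M : ℕ) (x : ℝ) : ℕ → ℝ
  | 0 => x
  | (n+1) => q * grem q M x n - gdig q M (grem q M x n)

variable {q : ℝ} {M : ℕ}

lemma grem_step_mem (hq1 : 1 < q) (hqM : q < (M : ℝ) + 1) {y : ℝ}
    (hy0 : 0 ≤ y) (hyM : y ≤ (M : ℝ) / (q - 1)) :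
    0 ≤ q * y - (gdig q M y : ℝ) ∧ q * y - (gdig q M y : ℝ) ≤ (M : ℝ) / (q - 1) := by
  have hq0 : 0 < q := lt_trans one_pos hq1
  have hq1' : 0 < q - 1 := by linarith
  have hy0' : 0 ≤ q * y := by positivity
  have hfl : (⌊q * y⌋₊ : ℝ) ≤ q * y := Nat.floor_le hy0'
  have hone : (1 : ℝ) ≤ (M : ℝ) / (q - 1) := by
    rw [le_div_iff₀ hq1']
    linarith
  rcases le_or_gt M ⌊q * y⌋₊ with hF | hF
  · have hdg : gdig q M y = M := min_eq_left hF
    rw [hdg]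
    constructor
    · have : (M : ℝ) ≤ (⌊q * y⌋₊ : ℝ) := Nat.cast_le.mpr hF
      linarith
    · have h2 : q * y ≤ q * ((M : ℝ) / (q - 1)) := by
        apply mul_le_mul_of_nonneg_left hyM (le_of_lt hq0)
      have h3 : q * ((M : ℝ) / (q - 1)) - (M : ℝ) = (M : ℝ) / (q - 1) := by
        field_simp
        ring
      linarith
  · have hdg : gdig q M y = ⌊q * y⌋₊ := min_eq_right (le_of_lt hF)
    rw [hdg]
    constructor
    · linarith
    · have h2 : q * y < (⌊q * y⌋₊ : ℝ) + 1 := Nat.lt_floor_add_one _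
      linarith

lemma grem_mem (hq1 : 1 < q) (hqM : q < (M : ℝ) + 1) {x : ℝ}
    (hx0 : 0 ≤ x) (hxM : x ≤ (M : ℝ) / (q - 1)) (n : ℕ) :
    0 ≤ grem q M x n ∧ grem q M x n ≤ (M : ℝ) / (q - 1) := by
  induction n with
  | zero => exact ⟨hx0, hxM⟩
  | succ n ih => exact grem_step_mem hq1 hqM ih.1 ih.2

lemma completion (hq1 : 1 < q) (hqM : q < (M : ℝ) + 1) {x : ℝ}
    (hx0 : 0 ≤ x) (hxM : x ≤ (M : ℝ) / (q - 1)) :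
    ∃ d : ℕ → ℕ, (∀ i, d i ≤ M) ∧ val q d = x := by
  have hq0 : 0 < q := lt_trans one_pos hq1
  set d : ℕ → ℕ := fun i => gdig q M (grem q M x i) with hd
  have hdig : ∀ i, d i ≤ M := fun i => min_le_left _ _
  refine ⟨d, hdig, ?_⟩
  have hdB : ∀ i, (d i : ℝ) ≤ (M : ℝ) := fun i => Nat.cast_le.mpr (hdig i)
  have hps : ∀ n, (∑ i ∈ Finset.range n, (d i : ℝ) / q ^ (i + 1)) = x - grem q M x n / q ^ n := by
    intro n
    induction n with
    | zero => simp [grem]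
    | succ n ih =>
      rw [Finset.sum_range_succ, ih]
      have : grem q M x (n + 1) = q * grem q M x n - (d n : ℝ) := rfl
      rw [this]
      have hqn : (q : ℝ) ^ n ≠ 0 := by positivity
      have hqn1 : (q : ℝ) ^ (n + 1) ≠ 0 := by positivity
      field_simp
      ring
  -- partial sums tend to x
  have hlim0 : Filter.Tendsto (fun n => grem q M x n / q ^ n) atTop (𝓝 0) := by
    have hb : ∀ n : ℕ, |grem q M x n / q ^ n| ≤ ((M : ℝ) / (q - 1)) * (1 / q) ^ n := by
      intro n
      have hm := grem_mem hq1 hqM hx0 hxM n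
      rw [abs_of_nonneg (div_nonneg hm.1 (by positivity))]
      rw [div_pow, one_pow, mul_one_div, div_le_div_iff₀ (by positivity) (by positivity)]
      exact mul_le_mul_of_nonneg_right hm.2 (by positivity)
    have hg : Filter.Tendsto (fun n : ℕ => ((M : ℝ) / (q - 1)) * (1 / q) ^ n) atTop (𝓝 0) := by
      rw [show (0:ℝ) = ((M : ℝ) / (q - 1)) * 0 by ring]
      apply Filter.Tendsto.const_mul
      apply tendsto_pow_atTop_nhds_zero_of_lt_one (by positivity)
      rw [div_lt_one hq0]; exact hq1
    exact squeeze_zero_norm hb hg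
  have hps_lim : Filter.Tendsto (fun n => ∑ i ∈ Finset.range n, (d i : ℝ) / q ^ (i + 1))
      atTop (𝓝 x) := by
    have : (fun n => ∑ i ∈ Finset.range n, (d i : ℝ) / q ^ (i + 1))
        = fun n => x - grem q M x n / q ^ n := funext hps
    rw [this]
    have := Filter.Tendsto.const_sub x hlim0
    simpa using this
  have hsum := summable_word hq1 hdB
  have := hsum.hasSum.tendsto_sum_nat
  exact tendsto_nhds_unique this hps_lim

end UnivoqueAux4

namespace UnivoqueAux5
open UnivoqueAux UnivoqueAux2 UnivoqueAux3 UnivoqueAux4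

variable {q : ℝ} {c : ℕ → ℕ} {M : ℕ}

lemma modify_val {B : ℝ} (hq1 : 1 < q) (hval : val q c = 1)
    (hBc : ∀ i, (c i : ℝ) ≤ B) (n : ℕ) {a : ℕ} {e : ℕ → ℕ}
    (hBd : ∀ i, (((if i < n then c i else if i = n then a else e (i - (n+1))) : ℕ) : ℝ) ≤ B)
    (ha : (a : ℝ) + val q e = (c n : ℝ) + tval q c (n + 1)) :
    val q (fun i => if i < n then c i else if i = n then a else e (i - (n+1))) = 1 := by
  set d : ℕ → ℕ := fun i => if i < n then c i else if i = n then a else e (i - (n+1)) with hdd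
  have hsd := val_split hq1 hBd (n+1)
  have hsc := val_split hq1 hBc (n+1)
  have htvd : tval q d (n+1) = val q e := by
    rw [tval]
    congr 1
    funext i
    show d (n + 1 + i) = e i
    rw [hdd]
    simp only
    rw [if_neg (by omega), if_neg (by omega)]
    congr 1
    omega
  have hsum : (∑ i ∈ Finset.range (n+1), (d i : ℝ) / q ^ (i + 1))
      = (∑ i ∈ Finset.range n, (c i : ℝ) / q ^ (i + 1)) + (a : ℝ) / q ^ (n+1) := by
    rw [Finset.sum_range_succ]
    congr 1
    · apply Finset.sum_congr rfl
      intro i hi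
      have hin := Finset.mem_range.mp hi
      rw [hdd]; simp only; rw [if_pos hin]
    · rw [hdd]; simp only; simp
  have hsumc : (∑ i ∈ Finset.range (n+1), (c i : ℝ) / q ^ (i + 1))
      = (∑ i ∈ Finset.range n, (c i : ℝ) / q ^ (i + 1)) + (c n : ℝ) / q ^ (n+1) := by
    rw [Finset.sum_range_succ]
  have hP : (0:ℝ) < q ^ (n+1) := by positivity
  have hdiv : (a : ℝ) / q ^ (n+1) + val q e / q ^ (n+1)
      = (c n : ℝ) / q ^ (n+1) + tval q c (n+1) / q ^ (n+1) := by
    rw [← add_div, ← add_div, ha]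
  rw [hsd, hsum, hval.symm.trans hsc, hsumc, htvd] at *
  linarith

lemma weak_G (hq1 : 1 < q) (hqM : q < (M : ℝ) + 1) (hMq : (M : ℝ) ≤ q)
    (hc : IsExpansion q c) (huniq : ∀ y, IsExpansion q y → y = c)
    (n : ℕ) (hn : c n < M) : tval q c (n + 1) ≤ 1 := by
  by_contra hlt
  push_neg at hlt
  have hcB : ∀ i, (c i : ℝ) ≤ q := hc.1
  have ht1 : tval q c (n+1) ≤ (M:ℝ)/(q-1) :=
    tval_le hq1 (fun i => Nat.cast_le.mpr (digits_le hqM hc.1 i)) (n+1)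
  obtain ⟨e, hedig, heval⟩ := completion hq1 hqM
    (x := tval q c (n+1) - 1) (by linarith) (by linarith)
  set d : ℕ → ℕ := fun i => if i < n then c i else if i = n then c n + 1 else e (i - (n+1)) with hdd
  have hBd : ∀ i, ((d i : ℕ) : ℝ) ≤ q := by
    intro i
    rw [hdd]; simp only
    split
    · exact hc.1 i
    · split
      · have : ((c n + 1 : ℕ) : ℝ) ≤ (M : ℝ) := Nat.cast_le.mpr (by omega)
        linarith
      · exact le_trans (Nat.cast_le.mpr (hedig _)) hMq
  have hvd : val q d = 1 := by
    apply modify_val hq1 hc.2 hcB n hBd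
    rw [heval]
    push_cast
    ring
  have := huniq d ⟨hBd, hvd⟩
  have hdn : d n = c n + 1 := by rw [hdd]; simp only; simp
  have := congrFun this n
  omega

lemma weak_L (hq1 : 1 < q) (hqM : q < (M : ℝ) + 1) (hMq : (M : ℝ) ≤ q)
    (hc : IsExpansion q c) (huniq : ∀ y, IsExpansion q y → y = c)
    (n : ℕ) (hn : 0 < c n) : (M : ℝ) / (q - 1) - 1 ≤ tval q c (n + 1) := by
  by_contra hlt
  push_neg at hlt
  have hcB : ∀ i, (c i : ℝ) ≤ q := hc.1
  have ht0 : 0 ≤ tval q c (n+1) := tval_nonneg _ (lt_trans one_pos hq1)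
  obtain ⟨e, hedig, heval⟩ := completion hq1 hqM
    (x := tval q c (n+1) + 1) (by linarith) (by linarith)
  set d : ℕ → ℕ := fun i => if i < n then c i else if i = n then c n - 1 else e (i - (n+1)) with hdd
  have hBd : ∀ i, ((d i : ℕ) : ℝ) ≤ q := by
    intro i
    rw [hdd]; simp only
    split
    · exact hc.1 i
    · split
      · have h1 : ((c n - 1 : ℕ) : ℝ) ≤ ((c n : ℕ) : ℝ) := Nat.cast_le.mpr (by omega)
        exact le_trans h1 (hc.1 n)
      · exact le_trans (Nat.cast_le.mpr (hedig _)) hMq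
  have hvd : val q d = 1 := by
    apply modify_val hq1 hc.2 hcB n hBd
    rw [heval]
    have : ((c n - 1 : ℕ) : ℝ) = (c n : ℝ) - 1 := by
      have : 1 ≤ c n := hn
      push_cast [this]
      ring
    rw [this]
    ring
  have := huniq d ⟨hBd, hvd⟩
  have := congrFun this n
  have hdn : d n = c n - 1 := by rw [hdd]; simp only; simp
  omega

end UnivoqueAux5

namespace UnivoqueAux6
open UnivoqueAux UnivoqueAux2 UnivoqueAux3 UnivoqueAux4 UnivoqueAux5

variable {q : ℝ} {m k : ℕ}

lemma geom_range (hq1 : 1 < q) (k : ℕ) :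
    ∑ i ∈ Finset.range k, (1:ℝ)/q^(i+1) = (1 - (1/q)^k)/(q-1) := by
  have hq0 : (0:ℝ) < q := lt_trans one_pos hq1
  have hqne : q ≠ 0 := ne_of_gt hq0
  have hq1ne : q - 1 ≠ 0 := by intro h; rw [sub_eq_zero] at h; rw [h] at hq1; exact lt_irrefl 1 hq1
  induction k with
  | zero => simp
  | succ k ih =>
    rw [Finset.sum_range_succ, ih]
    simp only [one_div, inv_pow]
    field_simp
    ring

def stepw (m K : ℕ) : ℕ → ℕ := fun i => if i < K then m else m - 1

lemma stepw_le (m K : ℕ) : ∀ i, stepw m K i ≤ m := by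
  intro i; unfold stepw; split <;> omega

lemma stepw_shift (m k s : ℕ) : (fun i => stepw m k (s + i)) = stepw m (k - s) := by
  funext i
  unfold stepw
  split_ifs with h1 h2 h2 <;> first | rfl | omega

lemma stepw_val (hq1 : 1 < q) (hm : 1 ≤ m) (K : ℕ) :
    val q (stepw m K) = ((m:ℝ) - (1/q)^K)/(q-1) := by
  have hq0 : (0:ℝ) < q := lt_trans one_pos hq1
  have hqne : q ≠ 0 := ne_of_gt hq0
  have hq1ne : q - 1 ≠ 0 := by intro h; rw [sub_eq_zero] at h; rw [h] at hq1; exact lt_irrefl 1 hq1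
  have hB : ∀ i, ((stepw m K i : ℕ) : ℝ) ≤ (m:ℝ) := fun i => Nat.cast_le.mpr (stepw_le m K i)
  have hsp := val_split hq1 hB K
  have htv : tval q (stepw m K) K = ((m:ℝ) - 1)/(q-1) := by
    rw [tval, stepw_shift, Nat.sub_self]
    have : ∀ i, ((stepw m 0 i : ℕ) : ℝ) = (m:ℝ) - 1 := by
      intro i
      unfold stepw
      rw [if_neg (Nat.not_lt_zero i)]
      push_cast [hm]
      ring
    rw [val, tsum_congr (fun i => by rw [this i]), tsum_const_div hq1]
  have hfin : (∑ i ∈ Finset.range K, ((stepw m K i : ℕ) : ℝ) / q ^ (i + 1))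
      = (m:ℝ) * ((1 - (1/q)^K)/(q-1)) := by
    rw [← geom_range hq1 K, Finset.mul_sum]
    apply Finset.sum_congr rfl
    intro i hi
    unfold stepw
    rw [if_pos (Finset.mem_range.mp hi)]
    field_simp
  rw [hsp, htv, hfin]
  have hpK : (1/q)^K = 1/q^K := by rw [one_div, inv_pow, one_div]
  rw [hpK]
  have hqK : (q:ℝ)^K ≠ 0 := by positivity
  field_simp
  ring

lemma exists_base (hm : 2 ≤ m) (hk : 1 ≤ k) :
    ∃ q : ℝ, (m:ℝ) < q ∧ q < (m:ℝ) + 1 ∧ q + (1/q)^k = (m:ℝ) + 1 := by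
  have hm0 : (0:ℝ) < m := by exact_mod_cast lt_of_lt_of_le two_pos hm
  have hm2 : (2:ℝ) ≤ (m:ℝ) := by exact_mod_cast hm
  set f : ℝ → ℝ := fun x => x + (1/x)^k with hf
  have hcont : ContinuousOn f (Set.Icc (m:ℝ) ((m:ℝ)+1)) := by
    apply ContinuousOn.add continuousOn_id
    apply ContinuousOn.pow
    apply ContinuousOn.div continuousOn_const continuousOn_id
    intro x hx
    have hx1 := hx.1
    simp only [id_eq]
    intro h
    rw [h] at hx1
    linarith
  have hfm : f (m:ℝ) < (m:ℝ) + 1 := by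
    have h1 : (1/(m:ℝ))^k < 1 := by
      apply pow_lt_one₀ (by positivity)
      · rw [div_lt_one hm0]
        linarith
      · omega
    simp only [hf]
    linarith
  have hfm1 : (m:ℝ) + 1 ≤ f ((m:ℝ)+1) := by
    have : (0:ℝ) ≤ (1/((m:ℝ)+1))^k := by positivity
    simp only [hf]
    linarith
  have hsub := intermediate_value_Icc (by linarith : (m:ℝ) ≤ (m:ℝ)+1) hcont
  have hmem : ((m:ℝ)+1) ∈ Set.Icc (f (m:ℝ)) (f ((m:ℝ)+1)) := ⟨le_of_lt hfm, hfm1⟩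
  obtain ⟨q, hq, hfq⟩ := hsub hmem
  refine ⟨q, ?_, ?_, hfq⟩
  · rcases lt_or_eq_of_le hq.1 with h | h
    · exact h
    · exfalso; rw [← h] at hfq; linarith
  · rcases lt_or_eq_of_le hq.2 with h | h
    · exact h
    · exfalso
      rw [h] at hfq
      have : (0:ℝ) < (1/((m:ℝ)+1))^k := by positivity
      simp only [hf] at hfq
      linarith

lemma base_univoque (hm : 2 ≤ m) (hk : 1 ≤ k)
    (h1 : (m:ℝ) < q) (h2 : q < (m:ℝ) + 1) (heq : q + (1/q)^k = (m:ℝ) + 1) :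
    q ∈ UnivoqueSet := by
  have hm2 : (2:ℝ) ≤ (m:ℝ) := by exact_mod_cast hm
  have hq1 : 1 < q := by linarith
  have hq0 : (0:ℝ) < q := by linarith
  have hq1' : (0:ℝ) < q - 1 := by linarith
  have hr2 : 1/q ≤ 1/2 := by
    apply div_le_div_of_nonneg_left one_pos.le two_pos ?_ |>.trans_eq rfl
    linarith
  have hr0 : (0:ℝ) ≤ 1/q := by positivity
  have ht05 : (1/q)^k ≤ 1/2 := by
    calc (1/q)^k ≤ (1/q)^1 := by
          apply pow_le_pow_of_le_one hr0 (by linarith) hk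
      _ = 1/q := pow_one _
      _ ≤ 1/2 := hr2
  have ht0 : 0 < (1/q)^k := by positivity
  have hqm1 : q - 1 = (m:ℝ) - (1/q)^k := by linarith
  set c := stepw m k with hc
  have hm1 : 1 ≤ m := by omega
  have hval : val q c = 1 := by
    rw [hc, stepw_val hq1 hm1 k, ← hqm1, div_self (ne_of_gt hq1')]
  have hdig : ∀ i, c i ≤ m := stepw_le m k
  have hdigR : ∀ i, (c i : ℝ) ≤ q := by
    intro i
    have : (c i : ℝ) ≤ (m:ℝ) := Nat.cast_le.mpr (hdig i)
    linarith
  have htv : ∀ s : ℕ, tval q c s = ((m:ℝ) - (1/q)^(k-s))/(q-1) := by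
    intro s
    rw [hc, tval, stepw_shift, stepw_val hq1 hm1]
  have hG : ∀ n, c n < m → tval q c (n+1) < 1 := by
    intro n hn
    have hkn : k - (n+1) = 0 := by
      rw [hc] at hn
      unfold stepw at hn
      by_contra hne
      rw [if_pos (by omega)] at hn
      omega
    rw [htv, hkn, pow_zero, div_lt_one hq1']
    linarith
  have hL : ∀ n, 0 < c n → (m:ℝ)/(q-1) - 1 < tval q c (n+1) := by
    intro n _
    rw [htv]
    have hlhs : (m:ℝ)/(q-1) - 1 = (1/q)^k/(q-1) := by
      rw [eq_div_iff (ne_of_gt hq1'), sub_mul, div_mul_cancel₀ _ (ne_of_gt hq1')]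
      linarith
    rw [hlhs, div_lt_div_iff_of_pos_right hq1']
    have hK1 : (1/q)^(k-(n+1)) ≤ 1 := pow_le_one₀ hr0 (by linarith)
    linarith
  refine ⟨le_of_lt hq1, c, ⟨hdigR, hval⟩, ?_⟩
  intro y hy
  exact unique_of_GL hq1 h2 hdig hval hG hL y hy

end UnivoqueAux6

namespace UnivoqueAux7
open UnivoqueAux UnivoqueAux2 UnivoqueAux3 UnivoqueAux4 UnivoqueAux5 UnivoqueAux6

lemma int_not_univoque {N : ℕ} (hN : 2 ≤ N) : ((N:ℝ)) ∉ UnivoqueSet := by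
  rintro ⟨-, c, -, huniq⟩
  have hN1 : (1:ℝ) < (N:ℝ) := by exact_mod_cast lt_of_lt_of_le one_lt_two hN
  have hN0 : (N:ℝ) ≠ 0 := by positivity
  set e1 : ℕ → ℕ := fun i => if i = 0 then N else 0 with he1
  set e2 : ℕ → ℕ := fun _ => N - 1 with he2
  have hexp1 : IsExpansion (N:ℝ) e1 := by
    constructor
    · intro i
      rw [he1]; simp only
      split <;> simp
    · rw [show (∑' i : ℕ, ((e1 i : ℕ):ℝ) / (N:ℝ) ^ (i+1)) = ((e1 0 : ℕ):ℝ) / (N:ℝ)^(0+1) from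
        tsum_eq_single 0 (fun b hb => by rw [he1]; simp only; rw [if_neg hb]; simp)]
      rw [he1]
      norm_num
      omega
  have hexp2 : IsExpansion (N:ℝ) e2 := by
    constructor
    · intro i
      rw [he2]
      have : ((N - 1 : ℕ) : ℝ) ≤ (N : ℝ) := Nat.cast_le.mpr (by omega)
      simpa using this
    · have hcast : ((N - 1 : ℕ) : ℝ) = (N:ℝ) - 1 := by
        have : 1 ≤ N := by omega
        push_cast [this]; ring
      rw [show (fun i : ℕ => ((e2 i : ℕ):ℝ) / (N:ℝ)^(i+1)) = fun i : ℕ => ((N:ℝ)-1) / (N:ℝ)^(i+1) by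
        funext i; rw [he2]; simp only; rw [hcast]]
      rw [tsum_const_div hN1]
      rw [div_self (by intro h; rw [sub_eq_zero] at h; rw [h] at hN1; exact lt_irrefl _ hN1)]
  have h1 := huniq e1 hexp1
  have h2 := huniq e2 hexp2
  have := congrFun (h1.trans h2.symm) 1
  rw [he1, he2] at this
  simp only [if_neg one_ne_zero] at this
  omega

lemma int_succ_mem_closure {m : ℕ} (hm : 2 ≤ m) : ((m:ℝ) + 1) ∈ closure UnivoqueSet := by
  rw [Metric.mem_closure_iff]
  intro ε hε
  obtain ⟨k0, hk0⟩ := exists_pow_lt_of_lt_one hε (by norm_num : (1:ℝ)/2 < 1)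
  set k := k0 + 1 with hk
  have hk1 : 1 ≤ k := by omega
  obtain ⟨q, h1, h2, heq⟩ := exists_base hm hk1
  have hqU := base_univoque hm hk1 h1 h2 heq
  refine ⟨q, hqU, ?_⟩
  have hm2 : (2:ℝ) ≤ (m:ℝ) := by exact_mod_cast hm
  have hq0 : (0:ℝ) < q := by linarith
  have hdist : dist ((m:ℝ)+1) q = (1/q)^k := by
    rw [Real.dist_eq, abs_of_pos (by linarith), ← heq]
    ring
  rw [hdist]
  have hr : (1:ℝ)/q ≤ 1/2 := by
    rw [div_le_div_iff₀ hq0 two_pos]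
    linarith
  calc (1/q)^k ≤ (1/2)^k := pow_le_pow_left₀ (by positivity) hr k
    _ ≤ (1/2)^k0 := by
        apply pow_le_pow_of_le_one (by norm_num) (by norm_num)
        omega
    _ < ε := hk0

lemma diff_infinite : (closure UnivoqueSet \ UnivoqueSet).Infinite := by
  apply Set.infinite_of_injective_forall_mem
    (f := fun j : ℕ => ((j:ℝ) + 3))
  case hi =>
    intro a b hab
    simp only at hab
    have : (a:ℝ) = (b:ℝ) := by linarith
    exact_mod_cast this
  case hf =>
    intro j
    constructor
    · have h := int_succ_mem_closure (m := j + 2) (by omega)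
      have he : ((j + 2 : ℕ):ℝ) + 1 = (j:ℝ) + 3 := by push_cast; ring
      rwa [he] at h
    · have h := int_not_univoque (N := j + 3) (by omega)
      have he : ((j + 3 : ℕ):ℝ) = (j:ℝ) + 3 := by push_cast; ring
      rwa [he] at h

end UnivoqueAux7

namespace UnivoqueAux8
open UnivoqueAux UnivoqueAux2 UnivoqueAux3

def GoodWords : Set (ℕ → ℕ) :=
  {w | (∃ N, ∀ i, N ≤ i → w i = 0) ∨ (∃ p, 0 < p ∧ ∀ i, w (i + p) = w i)}

lemma countable_finwords (N : ℕ) : {w : ℕ → ℕ | ∀ i, N ≤ i → w i = 0}.Countable := by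
  rw [Set.countable_coe_iff.symm]
  have hinj : Function.Injective
      (fun w : {w : ℕ → ℕ | ∀ i, N ≤ i → w i = 0} => (fun j : Fin N => (w : ℕ → ℕ) j)) := by
    rintro ⟨w, hw⟩ ⟨w', hw'⟩ h
    simp only [Subtype.mk.injEq]
    funext i
    rcases lt_or_ge i N with hi | hi
    · exact congrFun h ⟨i, hi⟩
    · rw [hw i hi, hw' i hi]
  exact hinj.countable

lemma countable_perwords (p : ℕ) (hp : 0 < p) : {w : ℕ → ℕ | ∀ i, w (i + p) = w i}.Countable := by
  rw [Set.countable_coe_iff.symm]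
  have hinj : Function.Injective
      (fun w : {w : ℕ → ℕ | ∀ i, w (i + p) = w i} => (fun j : Fin p => (w : ℕ → ℕ) j)) := by
    rintro ⟨w, hw⟩ ⟨w', hw'⟩ h
    simp only [Subtype.mk.injEq]
    funext i
    induction i using Nat.strong_induction_on with
    | _ i ih =>
      rcases lt_or_ge i p with hi | hi
      · exact congrFun h ⟨i, hi⟩
      · have h1 : i - p + p = i := by omega
        have := ih (i - p) (by omega)
        rw [← h1, hw (i-p), hw' (i-p)]
        exact this
  exact hinj.countable

lemma countable_goodWords : GoodWords.Countable := by
  have h1 : GoodWords ⊆ (⋃ N : ℕ, {w : ℕ → ℕ | ∀ i, N ≤ i → w i = 0}) ∪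
      (⋃ p : ℕ, ⋃ (_ : 0 < p), {w : ℕ → ℕ | ∀ i, w (i + p) = w i}) := by
    rintro w (⟨N, hN⟩ | ⟨p, hp, hper⟩)
    · exact Or.inl (Set.mem_iUnion.mpr ⟨N, hN⟩)
    · exact Or.inr (Set.mem_iUnion.mpr ⟨p, Set.mem_iUnion.mpr ⟨hp, hper⟩⟩)
  apply Set.Countable.mono h1
  apply Set.Countable.union
  · exact Set.countable_iUnion countable_finwords
  · exact Set.countable_iUnion (fun p => Set.countable_iUnion (fun hp => countable_perwords p hp))

lemma base_subsingleton (w : ℕ → ℕ) :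
    {q : ℝ | 1 ≤ q ∧ val q w = 1}.Subsingleton := by
  have key : ∀ q q' : ℝ, 1 ≤ q → q < q' → val q w = 1 → val q' w ≠ 1 := by
    intro q q' hq hqq' hv hv'
    have hq0 : (0:ℝ) < q := lt_of_lt_of_le one_pos hq
    have hq'0 : (0:ℝ) < q' := lt_trans hq0 hqq'
    have hsq : Summable (fun i : ℕ => (w i : ℝ) / q ^ (i+1)) := by
      by_contra hs
      rw [val, tsum_eq_zero_of_not_summable hs] at hv
      norm_num at hv
    have hsq' : Summable (fun i : ℕ => (w i : ℝ) / q' ^ (i+1)) := by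
      by_contra hs
      rw [val, tsum_eq_zero_of_not_summable hs] at hv'
      norm_num at hv'
    have hne : ∃ i0, w i0 ≠ 0 := by
      by_contra hz
      push_neg at hz
      rw [val, tsum_congr (f := fun i : ℕ => (w i : ℝ)/q^(i+1)) (g := fun _ => (0:ℝ))
        (fun i => by simp [hz i]), tsum_zero] at hv
      norm_num at hv
    obtain ⟨i0, hi0⟩ := hne
    have hlt : val q' w < val q w := by
      apply Summable.tsum_lt_tsum (i := i0) ?hle ?hlt hsq' hsq
      case hle =>
        intro i
        apply div_le_div_of_nonneg_left (Nat.cast_nonneg _) (by positivity)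
        exact pow_le_pow_left₀ (le_of_lt hq0) (le_of_lt hqq') _
      case hlt =>
        apply div_lt_div_of_pos_left
        · exact_mod_cast Nat.pos_of_ne_zero hi0
        · positivity
        · exact pow_lt_pow_left₀ hqq' (le_of_lt hq0) (by omega)
    rw [hv, hv'] at hlt
    exact lt_irrefl _ hlt
  intro q hq q' hq'
  rcases lt_trichotomy q q' with h | h | h
  · exact absurd hq'.2 (key q q' hq.1 h hq.2)
  · exact h
  · exact absurd hq.2 (key q' q hq'.1 h hq'.2)

end UnivoqueAux8

namespace UnivoqueAux9
open UnivoqueAux UnivoqueAux2 UnivoqueAux3 UnivoqueAux4 UnivoqueAux5 UnivoqueAux8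

variable {q : ℝ} {c : ℕ → ℕ} {M : ℕ}

lemma tval_eq_of_val (hq1 : 1 < q) {B : ℝ} (hB : ∀ i, (c i : ℝ) ≤ B) (hval : val q c = 1)
    (n : ℕ) : tval q c n = (1 - ∑ i ∈ Finset.range n, (c i : ℝ) / q ^ (i+1)) * q ^ n := by
  have hs := val_split hq1 hB n
  rw [hval] at hs
  have hqn : (q:ℝ)^n ≠ 0 := by positivity
  field_simp at hs ⊢
  linarith

lemma tval_compl (hq1 : 1 < q) (hdig : ∀ i, c i ≤ M) (s : ℕ) :
    val q (fun i => M - c (s + i)) = (M:ℝ)/(q-1) - tval q c s := by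
  have hcast : ∀ i : ℕ, (((M - c (s + i) : ℕ)) : ℝ) / q ^ (i+1)
      = (M:ℝ)/q^(i+1) - ((c (s+i) : ℕ):ℝ)/q^(i+1) := by
    intro i
    rw [← sub_div]
    congr 1
    have : c (s+i) ≤ M := hdig (s+i)
    push_cast [this]
    ring
  rw [val, tsum_congr hcast,
    Summable.tsum_sub (summable_word hq1 (c := fun _ => M) (fun _ => le_refl _))
      (summable_word hq1 (fun i => Nat.cast_le.mpr (hdig (s+i)))),
    tsum_const_div hq1]
  rfl

lemma good_word_of_mem_diff (hq1 : 1 < q) (hni : ∀ N : ℕ, q ≠ (N:ℝ))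
    (hcl : q ∈ closure UnivoqueSet) (hnu : q ∉ UnivoqueSet) :
    ∃ w ∈ GoodWords, val q w = 1 := by
  classical
  have hq0 : (0:ℝ) < q := lt_trans one_pos hq1
  set M := ⌊q⌋₊ with hM
  have hM1 : 1 ≤ M := Nat.le_floor (by exact_mod_cast le_of_lt hq1)
  have hMle : (M:ℝ) ≤ q := Nat.floor_le (le_of_lt hq0)
  have hMlt : (M:ℝ) < q := lt_of_le_of_ne hMle (Ne.symm (hni M))
  have hqM : q < (M:ℝ) + 1 := Nat.lt_floor_add_one q
  have hM1R : (1:ℝ) ≤ (M:ℝ) := by exact_mod_cast hM1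
  -- a sequence of univoque bases converging to q
  obtain ⟨P, hPU, hPlim⟩ := mem_closure_iff_seq_limit.mp hcl
  have hEv : ∀ᶠ j in atTop, P j ∈ Set.Ioo (M:ℝ) ((M:ℝ)+1) :=
    hPlim.eventually (isOpen_Ioo.eventually_mem ⟨hMlt, hqM⟩)
  obtain ⟨j₀, hj₀⟩ := eventually_atTop.mp hEv
  set Q : ℕ → ℝ := fun j => P (j + j₀) with hQ
  have hQU : ∀ j, Q j ∈ UnivoqueSet := fun j => hPU (j + j₀)
  have hQlim : Tendsto Q atTop (𝓝 q) := hPlim.comp (tendsto_add_atTop_nat j₀)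
  have hQI : ∀ j, (M:ℝ) < Q j ∧ Q j < (M:ℝ) + 1 := fun j => hj₀ (j + j₀) (by omega)
  have hQ1 : ∀ j, 1 < Q j := fun j => lt_of_le_of_lt hM1R (hQI j).1
  -- unique expansions of the bases
  set C : ℕ → (ℕ → ℕ) := fun j => (hQU j).2.choose with hC
  have hCexp : ∀ j, IsExpansion (Q j) (C j) := fun j => (hQU j).2.choose_spec.1
  have hCuniq : ∀ j, ∀ y, IsExpansion (Q j) y → y = C j := fun j => (hQU j).2.choose_spec.2
  have hCdig : ∀ j i, C j i ≤ M := by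
    intro j i
    exact digits_le (hQI j).2 (hCexp j).1 i
  have hCG : ∀ j n, C j n < M → tval (Q j) (C j) (n+1) ≤ 1 := by
    intro j n hn
    exact weak_G (hQ1 j) (hQI j).2 (le_of_lt (hQI j).1) (hCexp j) (hCuniq j) n hn
  have hCL : ∀ j n, 0 < C j n → (M:ℝ)/(Q j - 1) - 1 ≤ tval (Q j) (C j) (n+1) := by
    intro j n hn
    exact weak_L (hQ1 j) (hQI j).2 (le_of_lt (hQI j).1) (hCexp j) (hCuniq j) n hn
  -- compactness: extract a pointwise convergent subsequence of digit sequences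
  set E : ℕ → (ℕ → Fin (M+1)) := fun j i => ⟨C j i, Nat.lt_succ_of_le (hCdig j i)⟩ with hE
  obtain ⟨a, φ, hφ, hconv⟩ := SeqCompactSpace.tendsto_subseq E
  set c : ℕ → ℕ := fun i => (a i : ℕ) with hc
  have hcdig : ∀ i, c i ≤ M := fun i => Nat.lt_succ_iff.mp (a i).2
  have hcB : ∀ i, (c i : ℝ) ≤ (M:ℝ) := fun i => Nat.cast_le.mpr (hcdig i)
  have hcBq : ∀ i, (c i : ℝ) ≤ q := fun i => le_trans (hcB i) hMle
  set D : ℕ → (ℕ → ℕ) := fun j => C (φ j) with hD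
  set R : ℕ → ℝ := fun j => Q (φ j) with hR
  have hRlim : Tendsto R atTop (𝓝 q) := hQlim.comp hφ.tendsto_atTop
  have hR1 : ∀ j, 1 < R j := fun j => hQ1 (φ j)
  have hptw : ∀ i, ∀ᶠ j in atTop, D j i = c i := by
    intro i
    have h1 : Tendsto (fun j => E (φ j) i) atTop (𝓝 (a i)) := (tendsto_pi_nhds.mp hconv) i
    rw [nhds_discrete] at h1
    have h2 := tendsto_pure.mp h1
    apply h2.mono
    intro j hj
    have : (E (φ j) i : ℕ) = (a i : ℕ) := by rw [hj]
    exact this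
  -- convergence of partial sums
  have hSK : ∀ K : ℕ, Tendsto (fun j => ∑ i ∈ Finset.range K, (D j i : ℝ) / (R j) ^ (i+1))
      atTop (𝓝 (∑ i ∈ Finset.range K, (c i : ℝ) / q ^ (i+1))) := by
    intro K
    have hEvK : ∀ᶠ j in atTop, ∀ i ∈ Finset.range K, D j i = c i :=
      (Finset.eventually_all (Finset.range K)).mpr (fun i _ => hptw i)
    have h2 : Tendsto (fun j => ∑ i ∈ Finset.range K, (c i : ℝ) / (R j) ^ (i+1))
        atTop (𝓝 (∑ i ∈ Finset.range K, (c i : ℝ) / q ^ (i+1))) := by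
      apply tendsto_finset_sum
      intro i _
      exact Tendsto.div tendsto_const_nhds (hRlim.pow (i+1)) (by positivity)
    apply Tendsto.congr' _ h2
    apply hEvK.mono
    intro j hj
    exact (Finset.sum_congr rfl (fun i hi => by rw [hj i hi])).symm
  -- c is an expansion of 1 in base q
  have hDB : ∀ j i, ((D j i : ℕ):ℝ) ≤ (M:ℝ) := fun j i => Nat.cast_le.mpr (hCdig (φ j) i)
  have hDsplit : ∀ j K, (∑ i ∈ Finset.range K, (D j i : ℝ) / (R j) ^ (i+1))
      = 1 - tval (R j) (D j) K / (R j) ^ K := by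
    intro j K
    have h1 := val_split (hR1 j) (hDB j) K
    have hvRD : val (R j) (D j) = 1 := (hCexp (φ j)).2
    rw [hvRD] at h1
    linarith
  have hcsum : Summable (fun i : ℕ => (c i : ℝ) / q ^ (i+1)) := summable_word hq1 hcB
  have hSlim : Tendsto (fun K => ∑ i ∈ Finset.range K, (c i : ℝ) / q ^ (i+1))
      atTop (𝓝 (val q c)) := hcsum.hasSum.tendsto_sum_nat
  have hSub : ∀ K, (∑ i ∈ Finset.range K, (c i : ℝ) / q ^ (i+1)) ≤ 1 := by
    intro K
    apply le_of_tendsto (hSK K)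
    apply Filter.Eventually.of_forall
    intro j
    rw [hDsplit j K]
    have h0 := tval_nonneg (c := D j) K (lt_trans one_pos (hR1 j))
    have hp : (0:ℝ) < (R j) ^ K := pow_pos (lt_trans one_pos (hR1 j)) K
    have := div_nonneg h0 (le_of_lt hp)
    linarith
  have hSlb : ∀ K, 1 - ((M:ℝ)/(q-1)) / q ^ K ≤ ∑ i ∈ Finset.range K, (c i : ℝ) / q ^ (i+1) := by
    intro K
    have hlb : Tendsto (fun j => 1 - ((M:ℝ)/(R j - 1)) / (R j) ^ K) atTop
        (𝓝 (1 - ((M:ℝ)/(q-1)) / q ^ K)) := by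
      apply Tendsto.const_sub
      apply Tendsto.div (Tendsto.div tendsto_const_nhds (hRlim.sub tendsto_const_nhds) ?_)
        (hRlim.pow K) (ne_of_gt (pow_pos hq0 K))
      · intro h; rw [sub_eq_zero] at h; rw [← h] at hq1; exact lt_irrefl _ hq1
    apply le_of_tendsto_of_tendsto' hlb (hSK K)
    intro j
    rw [hDsplit j K]
    have hub := tval_le (hR1 j) (hDB j) K
    have hp : (0:ℝ) < (R j) ^ K := pow_pos (lt_trans one_pos (hR1 j)) K
    have h2 := div_le_div_of_nonneg_right hub (le_of_lt hp)
    linarith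
  have hcval : val q c = 1 := by
    apply le_antisymm
    · exact le_of_tendsto hSlim (Filter.Eventually.of_forall hSub)
    · have hlb2 : Tendsto (fun K : ℕ => 1 - ((M:ℝ)/(q-1)) / q ^ K) atTop (𝓝 1) := by
        have h3 : Tendsto (fun K : ℕ => ((M:ℝ)/(q-1)) / q ^ K) atTop (𝓝 0) := by
          have : ∀ K : ℕ, ((M:ℝ)/(q-1)) / q ^ K = ((M:ℝ)/(q-1)) * (1/q) ^ K := by
            intro K
            rw [div_pow, one_pow, mul_one_div]
          rw [funext this]
          rw [show (0:ℝ) = ((M:ℝ)/(q-1)) * 0 by ring]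
          exact Tendsto.const_mul _ (tendsto_pow_atTop_nhds_zero_of_lt_one (by positivity)
            (by rw [div_lt_one hq0]; exact hq1))
        have := Tendsto.const_sub (1:ℝ) h3
        simpa using this
      exact le_of_tendsto_of_tendsto' hlb2 hSlim hSlb
  -- convergence of tails
  have hTn : ∀ n : ℕ, Tendsto (fun j => tval (R j) (D j) (n+1)) atTop (𝓝 (tval q c (n+1))) := by
    intro n
    have h1 : ∀ j, tval (R j) (D j) (n+1)
        = (1 - ∑ i ∈ Finset.range (n+1), (D j i : ℝ) / (R j) ^ (i+1)) * (R j) ^ (n+1) :=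
      fun j => tval_eq_of_val (hR1 j) (hDB j) (hCexp (φ j)).2 (n+1)
    have h2 : tval q c (n+1)
        = (1 - ∑ i ∈ Finset.range (n+1), (c i : ℝ) / q ^ (i+1)) * q ^ (n+1) :=
      tval_eq_of_val hq1 hcB hcval (n+1)
    rw [funext h1, h2]
    exact Tendsto.mul (Tendsto.const_sub _ (hSK (n+1))) (hRlim.pow (n+1))
  -- weak greedy and lazy conditions for the limit expansion
  have hGc : ∀ n, c n < M → tval q c (n+1) ≤ 1 := by
    intro n hn
    apply le_of_tendsto (hTn n)
    apply (hptw n).mono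
    intro j hj
    exact hCG (φ j) n (show D j n < M by rw [hj]; exact hn)
  have hLc : ∀ n, 0 < c n → (M:ℝ)/(q-1) - 1 ≤ tval q c (n+1) := by
    intro n hn
    have hlim2 : Tendsto (fun j => (M:ℝ)/(R j - 1) - 1) atTop (𝓝 ((M:ℝ)/(q-1) - 1)) := by
      apply Tendsto.sub_const
      apply Tendsto.div tendsto_const_nhds (hRlim.sub tendsto_const_nhds)
      intro h; rw [sub_eq_zero] at h; rw [← h] at hq1; exact lt_irrefl _ hq1
    have hev : ∀ᶠ j in atTop, (M:ℝ)/(R j - 1) - 1 ≤ tval (R j) (D j) (n+1) := by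
      apply (hptw n).mono
      intro j hj
      exact hCL (φ j) n (show 0 < D j n by rw [hj]; exact hn)
    exact le_of_tendsto_of_tendsto hlim2 (hTn n) hev
  -- strictness must fail somewhere since q is not univoque
  by_cases hA : ∃ n, c n < M ∧ 1 ≤ tval q c (n+1)
  · -- Case A : finite expansion
    obtain ⟨n, hnM, hn1⟩ := hA
    have heq : tval q c (n+1) = 1 := le_antisymm (hGc n hnM) hn1
    have hBw : ∀ i, (((if i < n then c i else if i = n then c n + 1
        else (fun _ : ℕ => 0) (i - (n+1))) : ℕ):ℝ) ≤ q := by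
      intro i
      split
      · exact hcBq i
      · split
        · have : ((c n + 1 : ℕ):ℝ) ≤ (M:ℝ) := Nat.cast_le.mpr (by omega)
          linarith
        · norm_num
          linarith
    have hz : val q (fun _ : ℕ => 0) = 0 := by
      rw [val]
      convert tsum_zero with i
      norm_num
    have hwval : val q (fun i => if i < n then c i else if i = n then c n + 1
        else (fun _ : ℕ => 0) (i - (n+1))) = 1 := by
      apply modify_val (a := c n + 1) (e := fun _ : ℕ => 0) hq1 hcval hcBq n hBw
      rw [heq, hz]
      push_cast
      ring
    refine ⟨_, Or.inl ⟨n+1, ?_⟩, hwval⟩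
    intro i hi
    simp only
    rw [if_neg (by omega), if_neg (by omega)]
  · -- strict greedy condition holds
    push_neg at hA
    have hGs : ∀ n, c n < M → tval q c (n+1) < 1 := fun n hn => hA n hn
    have hB : ∃ n, 0 < c n ∧ tval q c (n+1) ≤ (M:ℝ)/(q-1) - 1 := by
      by_contra hBn
      push_neg at hBn
      apply hnu
      refine ⟨le_of_lt hq1, c, ⟨hcBq, hcval⟩, ?_⟩
      intro y hy
      exact unique_of_GL hq1 hqM hcdig hcval hGs (fun n hn => hBn n hn) y hy
    obtain ⟨n, hn0, hnle⟩ := hB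
    have heqL : tval q c (n+1) = (M:ℝ)/(q-1) - 1 := le_antisymm hnle (hLc n hn0)
    set β : ℕ → ℕ := fun i => M - c (n + 1 + i) with hβ
    have hβdig : ∀ i, β i ≤ M := fun i => Nat.sub_le _ _
    have hβB : ∀ i, ((β i : ℕ):ℝ) ≤ (M:ℝ) := fun i => Nat.cast_le.mpr (hβdig i)
    have hβval : val q β = 1 := by
      rw [hβ]
      rw [tval_compl hq1 hcdig (n+1), heqL]
      ring
    by_cases hβc : β = c
    · -- periodic expansion
      have hrel : ∀ i, M - c (n + 1 + i) = c i := fun i => congrFun hβc i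
      have hrel2 : ∀ i, c (n + 1 + i) = M - c i := by
        intro i
        have h1 := hrel i
        have h2 := hcdig (n + 1 + i)
        omega
      refine ⟨c, Or.inr ⟨2*(n+1), by omega, ?_⟩, hcval⟩
      intro i
      have hidx : i + 2*(n+1) = n + 1 + (n + 1 + i) := by omega
      rw [hidx, hrel2 (n+1+i), hrel2 i]
      have := hcdig i
      omega
    · -- β differs from c : c is finite
      obtain ⟨k, hpre, hk⟩ := first_diff hβc
      have hid := prefix_eq hq1 hβB hcB (hβval.trans hcval.symm) k hpre
      rcases lt_or_gt_of_ne hk with hlt | hgt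
      · -- β k < c k
        have hck : 0 < c k := by omega
        have htβ : tval q β (k+1) = (M:ℝ)/(q-1) - tval q c (n+k+2) := by
          rw [tval]
          have hfun : (fun i => β (k + 1 + i)) = (fun i => M - c (n + k + 2 + i)) := by
            funext i
            rw [hβ]
            simp only
            have hix : n + 1 + (k + 1 + i) = n + k + 2 + i := by omega
            rw [hix]
          rw [hfun]
          exact tval_compl hq1 hcdig (n+k+2)
        have hL2 := hLc k hck
        have h1R : (1:ℝ) ≤ (c k : ℝ) - (β k : ℝ) := by
          have : β k + 1 ≤ c k := hlt
          have := Nat.cast_le (α := ℝ).mpr this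
          push_cast at this
          linarith
        have htz : tval q c (n+k+2) ≤ 0 := by
          rw [htβ] at hid
          linarith
        have htze : tval q c (n+k+2) = 0 :=
          le_antisymm htz (tval_nonneg _ hq0)
        have hzero : ∀ i, c (n + k + 2 + i) = 0 := by
          intro i
          have hsum2 : Summable (fun i : ℕ => ((c (n+k+2+i)) : ℝ) / q ^ (i+1)) :=
            summable_word hq1 (fun i => hcB (n+k+2+i))
          have hle := hsum2.le_tsum i (fun j _ => by positivity)
          have htze' : (∑' i : ℕ, ((c (n+k+2+i)) : ℝ) / q ^ (i+1)) = 0 := htze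
          rw [htze'] at hle
          have ht0 : (0:ℝ) ≤ ((c (n+k+2+i)) : ℝ) / q^(i+1) := by positivity
          have hzz : ((c (n+k+2+i)) : ℝ) / q^(i+1) = 0 := le_antisymm hle ht0
          have hqne : (q:ℝ)^(i+1) ≠ 0 := by positivity
          rcases div_eq_zero_iff.mp hzz with h | h
          · exact_mod_cast h
          · exact absurd h hqne
        refine ⟨c, Or.inl ⟨n+k+2, ?_⟩, hcval⟩
        intro i hi
        have : i = n + k + 2 + (i - (n+k+2)) := by omega
        rw [this]
        exact hzero _
      · -- c k < β k : contradicts strict greedy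
        exfalso
        have hckM : c k < M := lt_of_lt_of_le hgt (hβdig k)
        have hG2 := hGs k hckM
        have h1R : (1:ℝ) ≤ (β k : ℝ) - (c k : ℝ) := by
          have : c k + 1 ≤ β k := hgt
          have := Nat.cast_le (α := ℝ).mpr this
          push_cast at this
          linarith
        have h0 := tval_nonneg (c := β) (k+1) hq0
        linarith

end UnivoqueAux9

namespace UnivoqueAux10
open UnivoqueAux UnivoqueAux2 UnivoqueAux3 UnivoqueAux8 UnivoqueAux9 UnivoqueAux7

lemma single_val {N : ℕ} (hN : 1 ≤ N) :
    val (N:ℝ) (fun i => if i = 0 then N else 0) = 1 := by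
  have hN0 : ((N:ℕ):ℝ) ≠ 0 := by
    simp only [ne_eq, Nat.cast_eq_zero]
    omega
  rw [val]
  rw [tsum_eq_single 0 (fun b hb => by rw [if_neg hb]; simp)]
  rw [if_pos rfl, pow_one, div_self hN0]

theorem main :
    (closure UnivoqueSet \ UnivoqueSet).Countable ∧
      (closure UnivoqueSet \ UnivoqueSet).Infinite := by
  constructor
  · have hsub : closure UnivoqueSet \ UnivoqueSet ⊆
        ⋃ w ∈ GoodWords, {q : ℝ | 1 ≤ q ∧ val q w = 1} := by
      rintro q ⟨hqc, hqn⟩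
      have hq1 : 1 ≤ q := by
        have hU : UnivoqueSet ⊆ Set.Ici (1:ℝ) := fun x hx => hx.1
        exact closure_minimal hU isClosed_Ici hqc
      by_cases hint : ∃ N : ℕ, q = (N:ℝ)
      · obtain ⟨N, rfl⟩ := hint
        have hN1 : 1 ≤ N := by exact_mod_cast hq1
        exact Set.mem_biUnion (Or.inl ⟨1, fun i hi => if_neg (by omega)⟩)
          ⟨hq1, single_val hN1⟩
      · push_neg at hint
        have hq1lt : 1 < q := by
          rcases lt_or_eq_of_le hq1 with h | h
          · exact h
          · exfalso
            apply hint 1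
            rw [← h]
            norm_num
        obtain ⟨w, hwG, hwval⟩ := good_word_of_mem_diff hq1lt hint hqc hqn
        exact Set.mem_biUnion hwG ⟨hq1, hwval⟩
    apply Set.Countable.mono hsub
    exact Set.Countable.biUnion countable_goodWords
      (fun w _ => (base_subsingleton w).countable)
  · exact diff_infinite

end UnivoqueAux10

end

/-- The set `closure 𝒰 \ 𝒰` is countably infinite. -/
theorem closure_diff_countably_infinite :
    (closure UnivoqueSet \ UnivoqueSet).Countable ∧
      (closure UnivoqueSet \ UnivoqueSet).Infinite := by
  exact UnivoqueAux10.main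
end

section
/- The closure of the set 𝒰 of univoque numbers is a perfect set: it is closed and has no isolated points. -/
namespace ClosureUnivoqueAux

open Finset Filter Topology

/-- The value `∑_{i≥0} c_i x^{-(i+1)}` of a digit sequence in base `x`. -/
noncomputable def val (x : ℝ) (c : ℕ → ℕ) : ℝ := ∑' i : ℕ, (c i : ℝ) / x ^ (i + 1)

/-- Shift a digit sequence by `k`. -/
def shift (k : ℕ) (c : ℕ → ℕ) : ℕ → ℕ := fun i => c (i + k)

/-- Digit-complement with respect to `m`. -/
def bar (m : ℕ) (c : ℕ → ℕ) : ℕ → ℕ := fun i => m - c i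

lemma shift_shift (a b : ℕ) (c : ℕ → ℕ) : shift a (shift b c) = shift (b + a) c := by
  funext i
  simp only [shift]
  congr 1
  omega

section Basic

variable {x : ℝ} {m : ℕ} {c : ℕ → ℕ}

lemma summable_val (hx : 1 < x) (hc : ∀ i, c i ≤ m) :
    Summable (fun i : ℕ => (c i : ℝ) / x ^ (i + 1)) := by
  have hx0 : (0:ℝ) < x := lt_trans one_pos hx
  have hgeo : Summable (fun i : ℕ => (m : ℝ) * (1/x) ^ i) :=
    (summable_geometric_of_lt_one (by positivity) (by rw [div_lt_one hx0]; exact hx)).mul_left _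
  refine Summable.of_nonneg_of_le (fun i => by positivity) (fun i => ?_) hgeo
  have h1 : (c i : ℝ) / x ^ (i+1) ≤ (m : ℝ) / x ^ (i+1) := by
    gcongr
    exact_mod_cast hc i
  have h2 : (m : ℝ) / x ^ (i+1) ≤ (m : ℝ) / x ^ i := by
    gcongr
    · exact hx.le
    · omega
  have h3 : (m : ℝ) / x ^ i = (m:ℝ) * (1/x)^i := by
    rw [one_div_pow, mul_one_div]
  linarith
lemma val_nonneg (hx : 0 < x) (c : ℕ → ℕ) : 0 ≤ val x c :=
  tsum_nonneg fun i => by positivity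

lemma tsum_onediv_geom (hx : 1 < x) : ∑' i : ℕ, 1 / x ^ (i + 1) = 1 / (x - 1) := by
  have hx0 : (0:ℝ) < x := lt_trans one_pos hx
  have hxne : x ≠ 0 := ne_of_gt hx0
  have hxm1 : x - 1 ≠ 0 := sub_ne_zero.mpr (ne_of_gt hx)
  have hr0 : (0:ℝ) ≤ 1/x := by positivity
  have hr1 : 1/x < 1 := by rw [div_lt_one hx0]; exact hx
  have h := tsum_geometric_of_lt_one hr0 hr1
  have h2 : ∀ i : ℕ, 1 / x ^ (i+1) = (1/x) * (1/x) ^ i := by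
    intro i
    rw [← one_div_pow, pow_succ']
  rw [tsum_congr h2, tsum_mul_left, h]
  have h3 : (1:ℝ) - 1/x ≠ 0 := by
    have : (1:ℝ) - 1/x = (x-1)/x := by field_simp
    rw [this]
    positivity
  field_simp

lemma val_const (hx : 1 < x) (m : ℕ) : val x (fun _ => m) = m / (x - 1) := by
  unfold val
  have h2 : ∀ i : ℕ, ((m:ℕ):ℝ) / x ^ (i+1) = (m:ℝ) * (1 / x ^ (i+1)) := by
    intro i; rw [mul_one_div]
  rw [tsum_congr h2, tsum_mul_left, tsum_onediv_geom hx, mul_one_div]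

lemma val_le (hx : 1 < x) (hc : ∀ i, c i ≤ m) : val x c ≤ m / (x - 1) := by
  rw [← val_const hx m]
  exact Summable.tsum_le_tsum (fun i => by gcongr; exact_mod_cast hc i)
    (summable_val hx hc) (summable_val hx (fun _ => le_refl m))

lemma val_lt_val {y : ℝ} (hx : 1 < x) (hxy : x < y) (hc : ∀ i, c i ≤ m)
    {i₀ : ℕ} (h₀ : 0 < c i₀) : val y c < val x c := by
  have hy : 1 < y := hx.trans hxy
  have hx0 : (0:ℝ) < x := lt_trans one_pos hx
  refine Summable.tsum_lt_tsum (i := i₀) (f := fun i => (c i:ℝ)/y^(i+1)) (g := fun i => (c i:ℝ)/x^(i+1))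
    (fun i => ?_) ?_ (summable_val hy hc) (summable_val hx hc)
  · apply div_le_div_of_nonneg_left (by positivity) (pow_pos hx0 _)
    exact pow_le_pow_left₀ hx0.le hxy.le _
  · apply div_lt_div_of_pos_left
    · exact_mod_cast h₀
    · exact pow_pos hx0 _
    · exact pow_lt_pow_left₀ hxy hx0.le (Nat.succ_ne_zero i₀)

lemma val_bar (hx : 1 < x) (hc : ∀ i, c i ≤ m) :
    val x (bar m c) = m / (x - 1) - val x c := by
  have h1 : ∀ i : ℕ, ((bar m c i : ℕ):ℝ)/x^(i+1) = (m:ℝ)/x^(i+1) - (c i:ℝ)/x^(i+1) := by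
    intro i
    simp only [bar]
    rw [Nat.cast_sub (hc i)]
    ring
  unfold val
  rw [tsum_congr h1, Summable.tsum_sub (summable_val hx (fun _ => le_refl m)) (summable_val hx hc)]
  have h2 := val_const hx m
  unfold val at h2
  rw [h2]

lemma val_split (hx : 1 < x) (hc : ∀ i, c i ≤ m) (k : ℕ) :
    val x c = (∑ i ∈ range k, (c i : ℝ) / x ^ (i+1)) + (1 / x ^ k) * val x (shift k c) := by
  have hxne : x ≠ 0 := ne_of_gt (lt_trans one_pos hx)
  have hs := summable_val hx hc
  have h1 := Summable.sum_add_tsum_nat_add k hs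
  have h2 : ∑' i : ℕ, ((c (i + k) : ℝ)) / x ^ ((i + k) + 1) = (1/x^k) * val x (shift k c) := by
    unfold val shift
    rw [← tsum_mul_left]
    refine tsum_congr fun i => ?_
    have he : (i + k) + 1 = k + (i + 1) := by omega
    rw [he, pow_add, div_mul_div_comm, one_mul]
  have h3 : val x c = (∑ i ∈ range k, (c i : ℝ) / x ^ (i+1)) + ∑' i : ℕ, ((c (i + k) : ℝ)) / x ^ ((i + k) + 1) := by
    unfold val
    exact h1.symm
  rw [h3, h2]

end Basic

end ClosureUnivoqueAux
namespace ClosureUnivoqueAux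

open Finset Filter Topology

/-- Remainder sequence of the greedy algorithm. -/
noncomputable def rem (q : ℝ) (m : ℕ) (t : ℝ) : ℕ → ℝ
  | 0 => t
  | n + 1 => q * rem q m t n - ((min m ⌊q * rem q m t n⌋₊ : ℕ) : ℝ)

/-- Digits of the greedy algorithm. -/
noncomputable def dig (q : ℝ) (m : ℕ) (t : ℝ) (n : ℕ) : ℕ := min m ⌊q * rem q m t n⌋₊

lemma rem_succ (q : ℝ) (m : ℕ) (t : ℝ) (n : ℕ) :
    rem q m t (n + 1) = q * rem q m t n - ((dig q m t n : ℕ) : ℝ) := rfl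

section Greedy

variable {q : ℝ} {m : ℕ}

lemma rem_mem (hm : 1 ≤ m) (h1 : (m:ℝ) < q) (h2 : q < m + 1) {t : ℝ}
    (ht0 : 0 ≤ t) (ht1 : t ≤ m / (q-1)) :
    ∀ n, 0 ≤ rem q m t n ∧ rem q m t n ≤ m / (q-1) := by
  have hm1 : (1:ℝ) ≤ m := by exact_mod_cast hm
  have hq1 : 1 < q := lt_of_le_of_lt hm1 h1
  have hq0 : 0 < q := lt_trans one_pos hq1
  have hq1' : 0 < q - 1 := by linarith
  intro n
  induction n with
  | zero => exact ⟨ht0, ht1⟩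
  | succ n ih =>
    obtain ⟨ih0, ih1⟩ := ih
    have hs0 : 0 ≤ q * rem q m t n := by positivity
    rw [rem_succ]
    unfold dig
    rcases le_or_gt (⌊q * rem q m t n⌋₊) m with h | h
    · rw [min_eq_right h]
      constructor
      · have := Nat.floor_le hs0
        linarith
      · have hfl := Nat.lt_floor_add_one (q * rem q m t n)
        have hM1 : 1 ≤ (m:ℝ) / (q-1) := by
          rw [le_div_iff₀ hq1']
          linarith
        linarith
    · rw [min_eq_left h.le]
      constructor
      · have hmf : (m:ℝ) + 1 ≤ (⌊q * rem q m t n⌋₊ : ℝ) := by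
          exact_mod_cast Nat.succ_le_of_lt h
        have := Nat.floor_le hs0
        linarith
      · have hqM : q * rem q m t n ≤ q * ((m:ℝ)/(q-1)) := by
          exact mul_le_mul_of_nonneg_left ih1 hq0.le
        have hqM2 : q * ((m:ℝ)/(q-1)) = (m:ℝ)/(q-1) + m := by
          field_simp
          ring
        linarith

lemma rem_partial (hq0 : 0 < q) (t : ℝ) :
    ∀ n, t = (∑ i ∈ range n, (dig q m t i : ℝ) / q ^ (i+1)) + rem q m t n / q ^ n := by
  intro n
  induction n with
  | zero => simp [rem]
  | succ n ih =>
    rw [Finset.sum_range_succ, rem_succ]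
    have hne : q ^ (n+1) ≠ 0 := by positivity
    have hne' : q ^ n ≠ 0 := by positivity
    have h : (q * rem q m t n - (dig q m t n : ℝ)) / q ^ (n+1)
        = rem q m t n / q ^ n - (dig q m t n : ℝ) / q ^ (n+1) := by
      rw [pow_succ]
      field_simp
    rw [h]
    linarith

lemma greedy_exists (hm : 1 ≤ m) (h1 : (m:ℝ) < q) (h2 : q < m + 1) {t : ℝ}
    (ht0 : 0 ≤ t) (ht1 : t ≤ m / (q-1)) :
    ∃ d : ℕ → ℕ, (∀ i, d i ≤ m) ∧ val q d = t := by
  have hm1 : (1:ℝ) ≤ m := by exact_mod_cast hm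
  have hq1 : 1 < q := lt_of_le_of_lt hm1 h1
  have hq0 : 0 < q := lt_trans one_pos hq1
  refine ⟨dig q m t, fun i => min_le_left _ _, ?_⟩
  have hdm : ∀ i, dig q m t i ≤ m := fun i => min_le_left _ _
  have hs := summable_val hq1 hdm
  have hlim1 := hs.hasSum.tendsto_sum_nat
  have hlim2 : Tendsto (fun n => ∑ i ∈ range n, (dig q m t i : ℝ)/q^(i+1)) atTop (𝓝 t) := by
    have heq : (fun n => ∑ i ∈ range n, (dig q m t i : ℝ)/q^(i+1))
        = fun n => t - rem q m t n / q ^ n := by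
      funext n
      have := rem_partial (m := m) hq0 t n
      linarith
    rw [heq]
    have hz : Tendsto (fun n : ℕ => rem q m t n / q ^ n) atTop (𝓝 0) := by
      apply squeeze_zero_norm (a := fun n : ℕ => ((m:ℝ)/(q-1)) * (1/q)^n)
      · intro n
        have hb := rem_mem hm h1 h2 ht0 ht1 n
        rw [Real.norm_eq_abs, abs_div, abs_of_nonneg hb.1, abs_of_pos (pow_pos hq0 n),
          one_div_pow, mul_one_div]
        gcongr
        exact hb.2
      · have hgeo : Tendsto (fun n : ℕ => (1/q)^n) atTop (𝓝 0) :=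
          tendsto_pow_atTop_nhds_zero_of_lt_one (by positivity) (by rw [div_lt_one hq0]; exact hq1)
        have := hgeo.const_mul ((m:ℝ)/(q-1))
        simpa using this
    have hconst : Tendsto (fun _ : ℕ => t) atTop (𝓝 t) := tendsto_const_nhds
    have := hconst.sub hz
    simpa using this
  exact tendsto_nhds_unique hlim1 hlim2

end Greedy

section Continuity

lemma val_continuousOn {m : ℕ} {c : ℕ → ℕ} (hc : ∀ i, c i ≤ m) {a : ℝ} (ha : 1 < a) :
    ContinuousOn (fun x => val x c) (Set.Ici a) := by
  have ha0 : (0:ℝ) < a := lt_trans one_pos ha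
  rw [continuousOn_iff_continuous_restrict]
  have hres : (Set.Ici a).restrict (fun x => val x c)
      = fun x : Set.Ici a => ∑' i : ℕ, (c i : ℝ) / (x:ℝ) ^ (i+1) := rfl
  change Continuous (fun x : Set.Ici a => ∑' i : ℕ, (c i : ℝ) / (x:ℝ) ^ (i+1))
  apply continuous_tsum (u := fun i : ℕ => (m:ℝ) * (1/a)^(i+1))
  · intro i
    apply Continuous.div continuous_const (continuous_subtype_val.pow (i+1))
    intro y
    exact pow_ne_zero _ (ne_of_gt (lt_of_lt_of_le ha0 y.2))
  · apply Summable.mul_left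
    have hgeo : Summable (fun i : ℕ => (1/a) * (1/a)^i) :=
      (summable_geometric_of_lt_one (by positivity) (by rw [div_lt_one ha0]; exact ha)).mul_left _
    exact hgeo.congr (fun i => (pow_succ' (1/a) i).symm)
  · intro n y
    have hy : a ≤ (y:ℝ) := y.2
    have hy0 : (0:ℝ) < (y:ℝ) := lt_of_lt_of_le ha0 hy
    rw [Real.norm_eq_abs, abs_of_nonneg (by positivity)]
    have hb1 : (c n : ℝ) / (y:ℝ)^(n+1) ≤ (m:ℝ) / (y:ℝ)^(n+1) := by
      gcongr
      exact_mod_cast hc n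
    have hb2 : (m:ℝ) / (y:ℝ)^(n+1) ≤ (m:ℝ) / a^(n+1) :=
      div_le_div_of_nonneg_left (by positivity) (pow_pos ha0 _) (pow_le_pow_left₀ ha0.le hy _)
    have hb3 : (m:ℝ)/a^(n+1) = (m:ℝ) * (1/a)^(n+1) := by
      rw [one_div_pow, mul_one_div]
    linarith

end Continuity

end ClosureUnivoqueAux
namespace ClosureUnivoqueAux

open Finset Filter Topology

section Expansion

variable {q : ℝ} {m : ℕ} {c : ℕ → ℕ}

/-- If the expansion of 1 is unique, then at every index with digit `< m`,
the tail value is `< 1`. -/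
lemma cond_upper (hm : 1 ≤ m) (h1 : (m:ℝ) < q) (h2 : q < m + 1)
    (hcm : ∀ i, c i ≤ m) (hval : val q c = 1)
    (huniq : ∀ e : ℕ → ℕ, IsExpansion q e → e = c)
    (k : ℕ) (hk : c k < m) : val q (shift (k+1) c) < 1 := by
  have hm1 : (1:ℝ) ≤ m := by exact_mod_cast hm
  have hq1 : 1 < q := lt_of_le_of_lt hm1 h1
  have hq0 : 0 < q := lt_trans one_pos hq1
  by_contra hcon
  push_neg at hcon
  set V := val q (shift (k+1) c) with hV
  have hVM : V ≤ m / (q-1) := val_le hq1 (fun i => hcm _)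
  obtain ⟨d, hdm, hdval⟩ := greedy_exists hm h1 h2 (t := V - 1) (by linarith)
    (by
      have h0 : (0:ℝ) ≤ m / (q-1) := div_nonneg (by positivity) (by linarith)
      linarith)
  set e : ℕ → ℕ := fun i => if i < k then c i else if i = k then c k + 1 else d (i - (k+1))
    with he
  have hem : ∀ i, e i ≤ m := by
    intro i
    simp only [he]
    split
    · exact hcm i
    · split
      · omega
      · exact hdm _
  have he_shift : shift (k+1) e = d := by
    funext i
    simp only [shift, he]
    rw [if_neg (by omega), if_neg (by omega)]
    congr 1
    omega
  have hek : e k = c k + 1 := by simp [he]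
  have hsplit_c := val_split hq1 hcm (k+1)
  have hsplit_e := val_split hq1 hem (k+1)
  rw [he_shift, hdval] at hsplit_e
  have hsum : ∑ i ∈ range (k+1), (e i:ℝ)/q^(i+1)
      = (∑ i ∈ range (k+1), (c i:ℝ)/q^(i+1)) + 1/q^(k+1) := by
    rw [Finset.sum_range_succ, Finset.sum_range_succ]
    have hpre : ∀ i ∈ range k, (e i:ℝ)/q^(i+1) = (c i:ℝ)/q^(i+1) := by
      intro i hi
      have := Finset.mem_range.mp hi
      simp [he, this]
    rw [Finset.sum_congr rfl hpre, hek]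
    push_cast
    ring
  have heval : val q e = 1 := by
    rw [hsplit_e, hsum]
    rw [hval] at hsplit_c
    linarith [hsplit_c]
  have hexp_e : IsExpansion q e := by
    constructor
    · intro i
      have : (e i : ℝ) ≤ m := by exact_mod_cast hem i
      linarith
    · exact heval
  have := huniq e hexp_e
  have : e k = c k := by rw [this]
  omega

/-- If the expansion of 1 is unique, then at every index with digit `> 0`,
the complementary tail value is `< 1`. -/
lemma cond_lower (hm : 1 ≤ m) (h1 : (m:ℝ) < q) (h2 : q < m + 1)
    (hcm : ∀ i, c i ≤ m) (hval : val q c = 1)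
    (huniq : ∀ e : ℕ → ℕ, IsExpansion q e → e = c)
    (k : ℕ) (hk : 0 < c k) : val q (bar m (shift (k+1) c)) < 1 := by
  have hm1 : (1:ℝ) ≤ m := by exact_mod_cast hm
  have hq1 : 1 < q := lt_of_le_of_lt hm1 h1
  have hq0 : 0 < q := lt_trans one_pos hq1
  by_contra hcon
  push_neg at hcon
  rw [val_bar (c := shift (k+1) c) hq1 (fun i => hcm _)] at hcon
  set V := val q (shift (k+1) c) with hV
  have hV0 : 0 ≤ V := val_nonneg hq0 _
  obtain ⟨d, hdm, hdval⟩ := greedy_exists hm h1 h2 (t := V + 1) (by linarith) (by linarith)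
  set e : ℕ → ℕ := fun i => if i < k then c i else if i = k then c k - 1 else d (i - (k+1))
    with he
  have hem : ∀ i, e i ≤ m := by
    intro i
    simp only [he]
    split
    · exact hcm i
    · split
      · have := hcm k; omega
      · exact hdm _
  have he_shift : shift (k+1) e = d := by
    funext i
    simp only [shift, he]
    rw [if_neg (by omega), if_neg (by omega)]
    congr 1
    omega
  have hek : e k = c k - 1 := by simp [he]
  have hsplit_c := val_split hq1 hcm (k+1)
  have hsplit_e := val_split hq1 hem (k+1)
  rw [he_shift, hdval] at hsplit_e
  have hsum : ∑ i ∈ range (k+1), (e i:ℝ)/q^(i+1)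
      = (∑ i ∈ range (k+1), (c i:ℝ)/q^(i+1)) - 1/q^(k+1) := by
    rw [Finset.sum_range_succ, Finset.sum_range_succ]
    have hpre : ∀ i ∈ range k, (e i:ℝ)/q^(i+1) = (c i:ℝ)/q^(i+1) := by
      intro i hi
      have := Finset.mem_range.mp hi
      simp [he, this]
    rw [Finset.sum_congr rfl hpre, hek]
    have hcast : ((c k - 1 : ℕ) : ℝ) = (c k : ℝ) - 1 := by
      rw [Nat.cast_sub hk]
      norm_num
    rw [hcast]
    ring
  have heval : val q e = 1 := by
    rw [hsplit_e, hsum]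
    rw [hval] at hsplit_c
    linarith [hsplit_c]
  have hexp_e : IsExpansion q e := by
    constructor
    · intro i
      have : (e i : ℝ) ≤ m := by exact_mod_cast hem i
      linarith
    · exact heval
  have := huniq e hexp_e
  have : e k = c k := by rw [this]
  omega

lemma exists_lt_m_ge (hm : 1 ≤ m) (h1 : (m:ℝ) < q) (h2 : q < m + 1)
    (hcm : ∀ i, c i ≤ m) (hval : val q c = 1)
    (huniq : ∀ e : ℕ → ℕ, IsExpansion q e → e = c)
    (N : ℕ) : ∃ k, N ≤ k ∧ c k < m := by
  have hm1 : (1:ℝ) ≤ m := by exact_mod_cast hm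
  have hq1 : 1 < q := lt_of_le_of_lt hm1 h1
  have hM : 1 < (m:ℝ)/(q-1) := by
    rw [lt_div_iff₀ (by linarith)]
    linarith
  by_contra hcon
  push_neg at hcon
  have hconst : ∀ k, N ≤ k → c k = m := fun k hk => le_antisymm (hcm k) (hcon k hk)
  by_cases hall : ∀ k, c k = m
  · have : val q c = (m:ℝ)/(q-1) := by
      rw [show c = (fun _ => m) from funext hall]
      exact val_const hq1 m
    rw [hval] at this
    linarith
  · push_neg at hall
    obtain ⟨k₀, hk₀⟩ := hall
    have hk₀N : k₀ < N := by
      by_contra hh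
      push_neg at hh
      exact hk₀ (hconst k₀ hh)
    set S := (Finset.range N).filter (fun k => c k ≠ m) with hS
    have hSne : S.Nonempty := ⟨k₀, by simp [hS, Finset.mem_filter, Finset.mem_range, hk₀N, hk₀]⟩
    set j := S.max' hSne with hj
    have hjS : j ∈ S := S.max'_mem hSne
    have hjm : c j < m := by
      have : c j ≠ m := (Finset.mem_filter.mp hjS).2
      have := hcm j
      omega
    have htail : shift (j+1) c = (fun _ => m) := by
      funext i
      simp only [shift]
      by_cases hge : N ≤ i + (j+1)
      · exact hconst _ hge
      · by_contra hne
        have hmem : (i + (j+1)) ∈ S := by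
          simp only [hS, Finset.mem_filter, Finset.mem_range]
          exact ⟨by omega, hne⟩
        have := S.le_max' _ hmem
        omega
    have := cond_upper hm h1 h2 hcm hval huniq j hjm
    rw [htail, val_const hq1] at this
    linarith

lemma exists_pos_ge (hm : 1 ≤ m) (h1 : (m:ℝ) < q) (h2 : q < m + 1)
    (hcm : ∀ i, c i ≤ m) (hval : val q c = 1)
    (huniq : ∀ e : ℕ → ℕ, IsExpansion q e → e = c)
    (N : ℕ) : ∃ k, N ≤ k ∧ 0 < c k := by
  have hm1 : (1:ℝ) ≤ m := by exact_mod_cast hm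
  have hq1 : 1 < q := lt_of_le_of_lt hm1 h1
  have hq0 : 0 < q := lt_trans one_pos hq1
  have hM : 1 < (m:ℝ)/(q-1) := by
    rw [lt_div_iff₀ (by linarith)]
    linarith
  by_contra hcon
  push_neg at hcon
  have hconst : ∀ k, N ≤ k → c k = 0 := fun k hk => Nat.le_zero.mp (hcon k hk)
  by_cases hall : ∀ k, c k = 0
  · have : val q c = 0 := by
      have : val q c ≤ 0 / (q - 1) := by
        have h0 : ∀ i, c i ≤ 0 := fun i => le_of_eq (hall i)
        have := val_le hq1 h0
        simpa using this
      have h2' := val_nonneg hq0 c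
      simp at this
      linarith
    rw [hval] at this
    norm_num at this
  · push_neg at hall
    obtain ⟨k₀, hk₀⟩ := hall
    have hk₀N : k₀ < N := by
      by_contra hh
      push_neg at hh
      exact hk₀ (hconst k₀ hh)
    set S := (Finset.range N).filter (fun k => c k ≠ 0) with hS
    have hSne : S.Nonempty := ⟨k₀, by simp [hS, Finset.mem_filter, Finset.mem_range, hk₀N, hk₀]⟩
    set j := S.max' hSne with hj
    have hjS : j ∈ S := S.max'_mem hSne
    have hjm : 0 < c j := by
      have : c j ≠ 0 := (Finset.mem_filter.mp hjS).2
      omega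
    have htail : shift (j+1) c = (fun _ => 0) := by
      funext i
      simp only [shift]
      by_cases hge : N ≤ i + (j+1)
      · exact hconst _ hge
      · by_contra hne
        have hmem : (i + (j+1)) ∈ S := by
          simp only [hS, Finset.mem_filter, Finset.mem_range]
          exact ⟨by omega, hne⟩
        have := S.le_max' _ hmem
        omega
    have hlow := cond_lower hm h1 h2 hcm hval huniq j hjm
    have hbar : bar m (shift (j+1) c) = (fun _ => m) := by
      funext i
      rw [htail]
      simp [bar]
    rw [hbar, val_const hq1] at hlow
    linarith

/-- Selection of a "good" splice index: an index `j ≥ N` with digit `< m` whose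
normalized upper margin is minimal among all earlier indices with digit `< m`. -/
lemma exists_good (hm : 1 ≤ m) (h1 : (m:ℝ) < q) (h2 : q < m + 1)
    (hcm : ∀ i, c i ≤ m) (hval : val q c = 1)
    (huniq : ∀ e : ℕ → ℕ, IsExpansion q e → e = c)
    (N : ℕ) : ∃ j, N ≤ j ∧ c j < m ∧ ∀ k < j, c k < m →
      (1 - val q (shift (j+1) c)) / q^(j+1) ≤ (1 - val q (shift (k+1) c)) / q^(k+1) := by
  have hm1 : (1:ℝ) ≤ m := by exact_mod_cast hm
  have hq1 : 1 < q := lt_of_le_of_lt hm1 h1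
  have hq0 : 0 < q := lt_trans one_pos hq1
  set φ : ℕ → ℝ := fun k => (1 - val q (shift (k+1) c)) / q^(k+1) with hφ
  have hφpos : ∀ k, c k < m → 0 < φ k := by
    intro k hk
    have := cond_upper hm h1 h2 hcm hval huniq k hk
    apply div_pos (by linarith) (pow_pos hq0 _)
  have hφle : ∀ k, φ k ≤ (1/q)^(k+1) := by
    intro k
    have h0 := val_nonneg hq0 (shift (k+1) c)
    rw [hφ, one_div_pow]
    simp only
    gcongr
    linarith
  obtain ⟨t0, ht0N, ht0m⟩ := exists_lt_m_ge hm h1 h2 hcm hval huniq N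
  set S := (Finset.range N).filter (fun k => c k < m) with hS
  by_cases hSne : S.Nonempty
  · obtain ⟨s₀, hs₀S, hs₀min⟩ := S.exists_min_image φ hSne
    have hs₀m : c s₀ < m := (Finset.mem_filter.mp hs₀S).2
    have hμpos : 0 < φ s₀ := hφpos s₀ hs₀m
    have htd : Tendsto (fun n : ℕ => (1/q)^n) atTop (𝓝 0) :=
      tendsto_pow_atTop_nhds_zero_of_lt_one (by positivity) (by rw [div_lt_one hq0]; exact hq1)
    have hev := htd.eventually (gt_mem_nhds hμpos)
    rw [Filter.eventually_atTop] at hev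
    obtain ⟨L, hL⟩ := hev
    obtain ⟨t, htge, htm⟩ := exists_lt_m_ge hm h1 h2 hcm hval huniq (max N L)
    have hφt : φ t < φ s₀ :=
      lt_of_le_of_lt (hφle t) (hL (t+1) (by
        have := le_max_right N L
        omega))
    set T := (Finset.range (t+1)).filter (fun k => c k < m) with hT
    have hTne : T.Nonempty :=
      ⟨t, Finset.mem_filter.mpr ⟨Finset.mem_range.mpr (by omega), htm⟩⟩
    obtain ⟨j, hjT, hjmin⟩ := T.exists_min_image φ hTne
    have hjm : c j < m := (Finset.mem_filter.mp hjT).2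
    have hjt : j < t + 1 := Finset.mem_range.mp (Finset.mem_filter.mp hjT).1
    have hφj : φ j < φ s₀ :=
      lt_of_le_of_lt (hjmin t (Finset.mem_filter.mpr ⟨Finset.mem_range.mpr (by omega), htm⟩)) hφt
    have hjN : N ≤ j := by
      by_contra hh
      push_neg at hh
      have hmem : j ∈ S := Finset.mem_filter.mpr ⟨Finset.mem_range.mpr hh, hjm⟩
      have := hs₀min j hmem
      linarith
    refine ⟨j, hjN, hjm, fun k hk hkm => ?_⟩
    exact hjmin k (Finset.mem_filter.mpr ⟨Finset.mem_range.mpr (by omega), hkm⟩)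
  · set T := (Finset.range (t0+1)).filter (fun k => c k < m) with hT
    have hTne : T.Nonempty :=
      ⟨t0, Finset.mem_filter.mpr ⟨Finset.mem_range.mpr (by omega), ht0m⟩⟩
    obtain ⟨j, hjT, hjmin⟩ := T.exists_min_image φ hTne
    have hjm : c j < m := (Finset.mem_filter.mp hjT).2
    have hjN : N ≤ j := by
      by_contra hh
      push_neg at hh
      exact hSne ⟨j, Finset.mem_filter.mpr ⟨Finset.mem_range.mpr hh, hjm⟩⟩
    refine ⟨j, hjN, hjm, fun k hk hkm => ?_⟩
    have hjt : j < t0 + 1 := Finset.mem_range.mp (Finset.mem_filter.mp hjT).1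
    exact hjmin k (Finset.mem_filter.mpr ⟨Finset.mem_range.mpr (by omega), hkm⟩)

/-- Sufficient condition for uniqueness of an expansion. -/
lemma unique_expansion {x : ℝ} {m : ℕ} {d : ℕ → ℕ}
    (hm : 1 ≤ m) (h1 : (m:ℝ) < x) (h2 : x < m + 1)
    (hd : ∀ i, d i ≤ m) (hdval : val x d = 1)
    (hcond : ∀ k : ℕ, (d k < m → val x (shift (k+1) d) < 1) ∧
      (0 < d k → val x (bar m (shift (k+1) d)) < 1)) :
    ∀ e : ℕ → ℕ, IsExpansion x e → e = d := by
  intro e he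
  by_contra hne
  have hm1 : (1:ℝ) ≤ m := by exact_mod_cast hm
  have hx1 : 1 < x := lt_of_le_of_lt hm1 h1
  have hx0 : 0 < x := lt_trans one_pos hx1
  have hem : ∀ i, e i ≤ m := by
    intro i
    have hle : (e i : ℝ) ≤ x := he.1 i
    have : (e i : ℝ) < (m:ℝ) + 1 := lt_of_le_of_lt hle h2
    have : e i < m + 1 := by exact_mod_cast this
    omega
  have hexists : ∃ n, e n ≠ d n := by
    by_contra hh
    push_neg at hh
    exact hne (funext hh)
  classical
  set n := Nat.find hexists with hn
  have hdiff : e n ≠ d n := Nat.find_spec hexists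
  have hpre : ∀ i, i < n → e i = d i := by
    intro i hi
    by_contra hh
    exact absurd hi (not_lt.mpr (Nat.find_le hh))
  have heval : val x e = 1 := he.2
  have hsplit_e := val_split hx1 hem n
  have hsplit_d := val_split hx1 hd n
  have hsum_eq : ∑ i ∈ range n, (e i:ℝ)/x^(i+1) = ∑ i ∈ range n, (d i:ℝ)/x^(i+1) :=
    Finset.sum_congr rfl (fun i hi => by rw [hpre i (Finset.mem_range.mp hi)])
  have hpow : (0:ℝ) < 1 / x ^ n := by positivity
  have htail_eq : val x (shift n e) = val x (shift n d) := by
    rw [heval] at hsplit_e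
    rw [hdval] at hsplit_d
    rw [hsum_eq] at hsplit_e
    have := hsplit_e.symm.trans hsplit_d
    have h' : (1/x^n) * val x (shift n e) = (1/x^n) * val x (shift n d) := by linarith
    exact mul_left_cancel₀ (ne_of_gt hpow) h'
  have hrange1 : ∀ (f : ℕ → ℕ), ∑ i ∈ range 1, ((shift n f) i : ℝ)/x^(i+1) = (f n : ℝ)/x := by
    intro f
    rw [Finset.sum_range_one]
    simp [shift, pow_one]
  have hse : val x (shift n e) = (e n : ℝ)/x + (1/x) * val x (shift (n+1) e) := by
    have h := val_split (c := shift n e) hx1 (fun i => hem _) 1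
    rw [shift_shift, hrange1 e] at h
    simpa [pow_one] using h
  have hsd : val x (shift n d) = (d n : ℝ)/x + (1/x) * val x (shift (n+1) d) := by
    have h := val_split (c := shift n d) hx1 (fun i => hd _) 1
    rw [shift_shift, hrange1 d] at h
    simpa [pow_one] using h
  have hkey : (e n : ℝ) + val x (shift (n+1) e) = (d n : ℝ) + val x (shift (n+1) d) := by
    rw [hse, hsd] at htail_eq
    have hxne : x ≠ 0 := ne_of_gt hx0
    field_simp at htail_eq
    linarith
  have hVe0 : 0 ≤ val x (shift (n+1) e) := val_nonneg hx0 _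
  have hVd0 : 0 ≤ val x (shift (n+1) d) := val_nonneg hx0 _
  have hVeM : val x (shift (n+1) e) ≤ m/(x-1) := val_le hx1 (fun i => hem _)
  rcases lt_trichotomy (e n) (d n) with hlt | heq | hgt
  · have hd0 : 0 < d n := by omega
    have hbar := (hcond n).2 hd0
    rw [val_bar (c := shift (n+1) d) hx1 (fun i => hd _)] at hbar
    have hcast : (e n : ℝ) + 1 ≤ (d n : ℝ) := by exact_mod_cast hlt
    linarith
  · exact hdiff (by omega)
  · have hdm : d n < m := by
      have := hem n
      omega
    have hup := (hcond n).1 hdm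
    have hcast : (d n : ℝ) + 1 ≤ (e n : ℝ) := by exact_mod_cast hgt
    linarith

end Expansion

end ClosureUnivoqueAux
namespace ClosureUnivoqueAux

open Finset Filter Topology

set_option maxHeartbeats 2000000 in
lemma main_approx {q : ℝ} (hq : q ∈ UnivoqueSet) {ε : ℝ} (hε : 0 < ε) :
    ∃ q', q' ∈ UnivoqueSet ∧ q' ≠ q ∧ |q' - q| < ε := by
  obtain ⟨hq1, hex⟩ := hq
  obtain ⟨c, hc, huniq⟩ := hex
  have hq0 : (0:ℝ) < q := by linarith
  -- `q` is not a natural number.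
  have hfl : (⌊q⌋₊ : ℝ) < q := by
    rcases lt_or_eq_of_le (Nat.floor_le hq0.le) with h | h
    · exact h
    · exfalso
      set N := ⌊q⌋₊ with hNdef
      have hN1 : 1 ≤ N := Nat.le_floor (by exact_mod_cast hq1)
      have hNpos : (0:ℝ) < (N:ℝ) := by exact_mod_cast hN1
      set e₁ : ℕ → ℕ := fun i => if i = 0 then N else 0 with he₁
      have hexp₁ : IsExpansion q e₁ := by
        constructor
        · intro i
          by_cases hi : i = 0
          · simp only [he₁, hi, if_pos rfl]
            exact le_of_eq h
          · simp only [he₁, if_neg hi]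
            exact_mod_cast hq0.le
        · have h0 : ∀ b : ℕ, b ≠ 0 → ((e₁ b : ℕ) : ℝ) / q ^ (b+1) = 0 := by
            intro b hb
            simp [he₁, hb]
          rw [tsum_eq_single 0 h0]
          simp only [he₁, if_pos rfl, zero_add, pow_one]
          rw [← h]
          exact div_self (ne_of_gt hNpos)
      rcases eq_or_lt_of_le hN1 with hN1' | hN2
      · have hqe : q = 1 := by rw [← h, ← hN1']; norm_num
        set e₂ : ℕ → ℕ := fun i => if i = 1 then 1 else 0 with he₂
        have hexp₂ : IsExpansion q e₂ := by
          constructor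
          · intro i
            by_cases hi : i = 1
            · simp only [he₂, hi, if_pos rfl]
              exact_mod_cast hq1
            · simp only [he₂, if_neg hi]
              exact_mod_cast hq0.le
          · have h0 : ∀ b : ℕ, b ≠ 1 → ((e₂ b : ℕ) : ℝ) / q ^ (b+1) = 0 := by
              intro b hb
              simp [he₂, hb]
            rw [tsum_eq_single 1 h0]
            simp [he₂, hqe]
        have hc₁ := huniq e₁ hexp₁
        have hc₂ := huniq e₂ hexp₂
        have heq : e₁ 0 = e₂ 0 := by rw [hc₁, hc₂]
        simp only [he₁, he₂, if_pos rfl] at heq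
        norm_num at heq
        omega
      · set e₂ : ℕ → ℕ := fun _ => N - 1 with he₂
        have hq1' : 1 < q := by
          rw [← h]
          exact_mod_cast hN2
        have hcast : ((N - 1 : ℕ) : ℝ) = (N : ℝ) - 1 := by
          rw [Nat.cast_sub hN1]
          norm_num
        have hexp₂ : IsExpansion q e₂ := by
          constructor
          · intro i
            simp only [he₂]
            rw [hcast, ← h]
            linarith
          · show val q e₂ = 1
            have hv := val_const hq1' (N - 1)
            rw [he₂, hv, hcast, ← h]
            rw [div_self (by linarith : (N:ℝ) - 1 ≠ 0)]
        have hc₁ := huniq e₁ hexp₁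
        have hc₂ := huniq e₂ hexp₂
        have heq : e₁ 1 = e₂ 1 := by rw [hc₁, hc₂]
        simp only [he₁, he₂] at heq
        norm_num at heq
        omega
  -- basic facts about `m = ⌊q⌋₊`
  have hq_gt1 : 1 < q := by
    rcases eq_or_lt_of_le hq1 with h | h
    · exfalso
      have h1' : (⌊q⌋₊ : ℝ) < q := hfl
      rw [← h] at h1'
      norm_num at h1'
    · exact h
  set m := ⌊q⌋₊ with hmdef
  have hm1 : 1 ≤ m := Nat.le_floor (by exact_mod_cast hq1)
  have hm1' : (1:ℝ) ≤ (m:ℝ) := by exact_mod_cast hm1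
  have h1 : (m:ℝ) < q := hfl
  have h2 : q < (m:ℝ) + 1 := by
    have := Nat.lt_floor_add_one q
    exact_mod_cast this
  have hcm : ∀ i, c i ≤ m := fun i => Nat.le_floor (hc.1 i)
  have hval : val q c = 1 := hc.2
  have hM1 : 1 < (m:ℝ)/(q-1) := by
    rw [lt_div_iff₀ (by linarith)]
    linarith
  -- choose `q''`
  set q'' := min (q + ε/2) ((q + (m+1))/2) with hq''def
  have hq''_gt : q < q'' := by
    apply lt_min (by linarith)
    linarith
  have hq''_lt_eps : q'' ≤ q + ε/2 := min_le_left _ _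
  have hq''m : q'' < (m:ℝ) + 1 := by
    apply lt_of_le_of_lt (min_le_right _ _)
    linarith
  have hq''1 : 1 < q'' := lt_trans hq_gt1 hq''_gt
  -- a positive digit of `c`
  obtain ⟨k₀, -, hk₀⟩ := exists_pos_ge hm1 h1 h2 hcm hval huniq 0
  have hvc'' : val q'' c < 1 := by
    have := val_lt_val hq_gt1 hq''_gt hcm hk₀
    linarith [hval]
  set η := 1 - val q'' c with hη
  have hηpos : 0 < η := by rw [hη]; linarith
  -- choose the cut-off `N`
  have htd : Tendsto (fun n : ℕ => (1/q'')^n) atTop (𝓝 0) :=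
    tendsto_pow_atTop_nhds_zero_of_lt_one (by positivity)
      (by rw [div_lt_one (by linarith)]; exact hq''1)
  have hev := htd.eventually (gt_mem_nhds hηpos)
  rw [Filter.eventually_atTop] at hev
  obtain ⟨N, hN⟩ := hev
  -- choose a good splice index `j ≥ N`
  obtain ⟨j, hjN, hjm, hjgood⟩ := exists_good hm1 h1 h2 hcm hval huniq N
  set Vj := val q (shift (j+1) c) with hVjdef
  have hVj1 : Vj < 1 := cond_upper hm1 h1 h2 hcm hval huniq j hjm
  have hVj0 : 0 ≤ Vj := val_nonneg hq0 _
  -- the new digit sequence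
  set c' : ℕ → ℕ := fun i => if i < j + 1 then c i else c (i - (j+1)) with hc'def
  have hc'm : ∀ i, c' i ≤ m := by
    intro i
    simp only [hc'def]
    split
    · exact hcm i
    · exact hcm _
  have hshift_c' : shift (j+1) c' = c := by
    funext i
    simp only [shift, hc'def]
    rw [if_neg (by omega)]
    congr 1
    omega
  have hpre : ∀ i, i < j + 1 → c' i = c i := by
    intro i hi
    simp only [hc'def, if_pos hi]
  -- value of `c'` at `q`
  have hsplit_c := val_split hq_gt1 hcm (j+1)
  have hsplit_c' := val_split hq_gt1 hc'm (j+1)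
  rw [hshift_c', hval] at hsplit_c'
  have hsum_pre : ∑ i ∈ range (j+1), (c' i:ℝ)/q^(i+1) = ∑ i ∈ range (j+1), (c i:ℝ)/q^(i+1) :=
    Finset.sum_congr rfl (fun i hi => by rw [hpre i (Finset.mem_range.mp hi)])
  have hvalgt : 1 < val q c' := by
    rw [hsplit_c', hsum_pre]
    rw [hval] at hsplit_c
    have hw : 0 < (1/q^(j+1)) := by positivity
    nlinarith [hsplit_c]
  -- value of `c'` at `q''` is `< 1`
  have hvalc''lt : val q'' c' < 1 := by
    have hsplit'' := val_split hq''1 hc'm (j+1)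
    rw [hshift_c'] at hsplit''
    have hsum_pre'' : ∑ i ∈ range (j+1), (c' i:ℝ)/q''^(i+1)
        = ∑ i ∈ range (j+1), (c i:ℝ)/q''^(i+1) :=
      Finset.sum_congr rfl (fun i hi => by rw [hpre i (Finset.mem_range.mp hi)])
    have hpartial : ∑ i ∈ range (j+1), (c i:ℝ)/q''^(i+1) ≤ val q'' c :=
      Summable.sum_le_tsum (range (j+1)) (fun i _ => by positivity) (summable_val hq''1 hcm)
    have hvp : 0 ≤ val q'' c := val_nonneg (by linarith) c
    have hwle : (1/q''^(j+1)) * val q'' c ≤ (1/q'')^(j+1) := by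
      rw [one_div_pow]
      have hle1 : val q'' c ≤ 1 := hvc''.le
      have hp : (0:ℝ) < 1/q''^(j+1) := by positivity
      nlinarith
    have hNj := hN (j+1) (by omega)
    rw [hsplit'', hsum_pre'']
    have : η = 1 - val q'' c := hη
    linarith
  -- find `q'` by the intermediate value theorem
  have hcont : ContinuousOn (fun x => val x c') (Set.Icc q q'') :=
    (val_continuousOn hc'm hq_gt1).mono (fun y hy => hy.1)
  have hIVT := intermediate_value_Icc' hq''_gt.le hcont
  have h1mem : (1:ℝ) ∈ Set.Icc (val q'' c') (val q c') := ⟨hvalc''lt.le, hvalgt.le⟩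
  obtain ⟨q', hq'mem, hq'val⟩ := hIVT h1mem
  obtain ⟨hq'ge, hq'le⟩ := hq'mem
  have hval' : val q' c' = 1 := hq'val
  have hq'ne : q' ≠ q := by
    intro h
    rw [h] at hval'
    linarith
  have hq'ne'' : q' ≠ q'' := by
    intro h
    rw [h] at hval'
    linarith
  have hq'gt : q < q' := lt_of_le_of_ne hq'ge (Ne.symm hq'ne)
  have hq'ltq'' : q' < q'' := lt_of_le_of_ne hq'le hq'ne''
  have hq'm1 : q' < (m:ℝ) + 1 := lt_trans hq'ltq'' hq''m
  have hq'm : (m:ℝ) < q' := lt_trans h1 hq'gt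
  have hq'1 : 1 < q' := lt_trans hq_gt1 hq'gt
  -- witnesses for strict monotonicity
  have hwit_pos_c : ∀ n : ℕ, ∃ i, 0 < shift n c i := by
    intro n
    obtain ⟨k₁, hk₁ge, hk₁pos⟩ := exists_pos_ge hm1 h1 h2 hcm hval huniq n
    refine ⟨k₁ - n, ?_⟩
    simp only [shift]
    have : k₁ - n + n = k₁ := by omega
    rw [this]
    exact hk₁pos
  have hwit_lt_c : ∀ n : ℕ, ∃ i, shift n c i < m := by
    intro n
    obtain ⟨k₁, hk₁ge, hk₁lt⟩ := exists_lt_m_ge hm1 h1 h2 hcm hval huniq n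
    refine ⟨k₁ - n, ?_⟩
    simp only [shift]
    have : k₁ - n + n = k₁ := by omega
    rw [this]
    exact hk₁lt
  have hwit_pos_c' : ∀ n : ℕ, ∃ i, 0 < shift n c' i := by
    intro n
    obtain ⟨i, hi⟩ := hwit_pos_c n
    refine ⟨i + (j+1), ?_⟩
    simp only [shift, hc'def]
    rw [if_neg (by omega)]
    simp only [shift] at hi
    have harith : i + (j + 1) + n - (j + 1) = i + n := by omega
    rw [harith]
    exact hi
  have hwit_lt_c' : ∀ n : ℕ, ∃ i, shift n c' i < m := by
    intro n
    obtain ⟨i, hi⟩ := hwit_lt_c n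
    refine ⟨i + (j+1), ?_⟩
    simp only [shift, hc'def]
    rw [if_neg (by omega)]
    simp only [shift] at hi
    have harith : i + (j + 1) + n - (j + 1) = i + n := by omega
    rw [harith]
    exact hi
  -- the uniqueness conditions for `c'` at `q'`
  have hCOND : ∀ k : ℕ, (c' k < m → val q' (shift (k+1) c') < 1) ∧
      (0 < c' k → val q' (bar m (shift (k+1) c')) < 1) := by
    intro k
    have hdig' : ∀ i, shift (k+1) c' i ≤ m := fun i => hc'm _
    rcases lt_trichotomy k j with hkj | hkj | hkj
    · -- k < j
      have e1 := val_split (c := shift (k+1) c') hq_gt1 (fun i => hc'm _) (j - k)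
      have e2 := val_split (c := shift (k+1) c) hq_gt1 (fun i => hcm _) (j - k)
      rw [shift_shift] at e1 e2
      have hjk1 : (k+1) + (j-k) = j + 1 := by omega
      rw [hjk1] at e1 e2
      rw [hshift_c', hval] at e1
      rw [← hVjdef] at e2
      have hpre2 : ∑ i ∈ range (j-k), ((shift (k+1) c') i : ℝ)/q^(i+1)
          = ∑ i ∈ range (j-k), ((shift (k+1) c) i:ℝ)/q^(i+1) := by
        refine Finset.sum_congr rfl (fun i hi => ?_)
        have hilt : i < j - k := Finset.mem_range.mp hi
        simp only [shift]
        rw [hpre (i + (k+1)) (by omega)]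
      have hval_shift : val q (shift (k+1) c')
          = val q (shift (k+1) c) + (1/q^(j-k)) * (1 - Vj) := by
        rw [e1, e2, hpre2]
        ring
      have hwpos : (0:ℝ) < 1/q^(j-k) := by positivity
      constructor
      · intro hck
        have hckc : c k < m := by rwa [hpre k (by omega)] at hck
        have hgood := hjgood k hkj hckc
        set Vk := val q (shift (k+1) c) with hVkdef
        have hkey : (1/q^(j-k)) * (1 - Vj) ≤ 1 - Vk := by
          rw [div_le_div_iff₀ (by positivity) (by positivity)] at hgood
          -- (1 - Vj) * q^(k+1) ≤ (1 - Vk) * q^(j+1)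
          have hpow : q^(j+1) = q^(k+1) * q^(j-k) := by
            rw [← pow_add]
            congr 1
            omega
          rw [hpow] at hgood
          have hk1pos : (0:ℝ) < q^(k+1) := by positivity
          have h4 : (1 - Vj) * q^(k+1) ≤ ((1 - Vk) * q^(j-k)) * q^(k+1) := by
            calc (1 - Vj) * q^(k+1) ≤ (1 - Vk) * (q^(k+1) * q^(j-k)) := hgood
            _ = ((1 - Vk) * q^(j-k)) * q^(k+1) := by ring
          have h5 := le_of_mul_le_mul_right h4 hk1pos
          rw [one_div, inv_mul_eq_div, div_le_iff₀ (by positivity)]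
          exact h5
        have hle1 : val q (shift (k+1) c') ≤ 1 := by
          rw [hval_shift]
          linarith
        obtain ⟨i₀, hi₀⟩ := hwit_pos_c' (k+1)
        calc val q' (shift (k+1) c') < val q (shift (k+1) c') :=
              val_lt_val hq_gt1 hq'gt hdig' hi₀
        _ ≤ 1 := hle1
      · intro hck
        have hckc : 0 < c k := by rwa [hpre k (by omega)] at hck
        have hVk2 := cond_lower hm1 h1 h2 hcm hval huniq k hckc
        rw [val_bar (c := shift (k+1) c) hq_gt1 (fun i => hcm _)] at hVk2
        have hbar_le : val q (bar m (shift (k+1) c')) ≤ (m:ℝ)/(q-1) - val q (shift (k+1) c) := by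
          rw [val_bar (c := shift (k+1) c') hq_gt1 hdig', hval_shift]
          have hnn : (0:ℝ) ≤ (1/q^(j-k)) * (1 - Vj) := mul_nonneg hwpos.le (by linarith)
          linarith
        obtain ⟨i₀, hi₀⟩ := hwit_lt_c' (k+1)
        have hi₀' : 0 < bar m (shift (k+1) c') i₀ := by
          simp only [bar]
          omega
        calc val q' (bar m (shift (k+1) c')) < val q (bar m (shift (k+1) c')) :=
              val_lt_val hq_gt1 hq'gt (fun i => Nat.sub_le _ _) hi₀'
        _ ≤ (m:ℝ)/(q-1) - val q (shift (k+1) c) := hbar_le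
        _ < 1 := hVk2
    · -- k = j
      subst hkj
      rw [hshift_c']
      constructor
      · intro _
        calc val q' c < val q c := val_lt_val hq_gt1 hq'gt hcm hk₀
        _ = 1 := hval
      · intro hck
        have hcjc : 0 < c k := by rwa [hpre k (by omega)] at hck
        have hB := cond_lower hm1 h1 h2 hcm hval huniq k hcjc
        rw [val_bar (c := shift (k+1) c) hq_gt1 (fun i => hcm _)] at hB
        have hM2 : (m:ℝ)/(q-1) < 2 := by
          rw [← hVjdef] at hB
          linarith
        obtain ⟨i₁, hi₁⟩ := hwit_lt_c 0
        have hi₁' : 0 < bar m c i₁ := by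
          simp only [bar]
          simp only [shift, Nat.add_zero] at hi₁
          omega
        have hbarval : val q (bar m c) = (m:ℝ)/(q-1) - 1 := by
          rw [val_bar hq_gt1 hcm, hval]
        calc val q' (bar m c) < val q (bar m c) :=
              val_lt_val hq_gt1 hq'gt (fun i => Nat.sub_le _ _) hi₁'
        _ = (m:ℝ)/(q-1) - 1 := hbarval
        _ < 1 := by linarith
    · -- j < k
      have hk1 : (j+1) + (k - j) = k + 1 := by omega
      have hsh : shift (k+1) c' = shift (k - j) c := by
        rw [← hk1, ← shift_shift, hshift_c']
      set k' := k - (j + 1) with hk'def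
      have hk'succ : k' + 1 = k - j := by omega
      have hdigit : c' k = c k' := by
        simp only [hc'def]
        rw [if_neg (by omega)]
      rw [hsh, ← hk'succ, hdigit]
      constructor
      · intro hck
        have hup := cond_upper hm1 h1 h2 hcm hval huniq k' hck
        obtain ⟨i₀, hi₀⟩ := hwit_pos_c (k'+1)
        calc val q' (shift (k'+1) c) < val q (shift (k'+1) c) :=
              val_lt_val hq_gt1 hq'gt (fun i => hcm _) hi₀
        _ < 1 := hup
      · intro hck
        have hlow := cond_lower hm1 h1 h2 hcm hval huniq k' hck
        obtain ⟨i₀, hi₀⟩ := hwit_lt_c (k'+1)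
        have hi₀' : 0 < bar m (shift (k'+1) c) i₀ := by
          simp only [bar]
          omega
        calc val q' (bar m (shift (k'+1) c)) < val q (bar m (shift (k'+1) c)) :=
              val_lt_val hq_gt1 hq'gt (fun i => Nat.sub_le _ _) hi₀'
        _ < 1 := hlow
  -- `c'` is an expansion of `1` in base `q'`
  have hexp' : IsExpansion q' c' := by
    constructor
    · intro i
      have : (c' i : ℝ) ≤ (m:ℝ) := by exact_mod_cast hc'm i
      linarith
    · exact hval'
  have huniq' := unique_expansion hm1 hq'm hq'm1 hc'm hval' hCOND
  refine ⟨q', ⟨le_of_lt hq'1, c', hexp', huniq'⟩, hq'ne, ?_⟩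
  rw [abs_sub_lt_iff]
  constructor
  · linarith
  · linarith

end ClosureUnivoqueAux

/-- The closure of the set of univoque numbers is a perfect set. -/
theorem closure_univoque_perfect : Perfect (closure UnivoqueSet) := by
  constructor
  · exact isClosed_closure
  · intro x hx
    rw [accPt_iff_nhds]
    intro V hV
    by_cases hxU : x ∈ UnivoqueSet
    · obtain ⟨ε, hε, hball⟩ := Metric.mem_nhds_iff.mp hV
      obtain ⟨q', hq'U, hne, hlt⟩ := ClosureUnivoqueAux.main_approx hxU hε
      refine ⟨q', ⟨hball ?_, subset_closure hq'U⟩, hne⟩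
      rw [Metric.mem_ball, Real.dist_eq]
      exact hlt
    · obtain ⟨y, hyV, hyU⟩ := mem_closure_iff_nhds.mp hx V hV
      exact ⟨y, ⟨hyV, subset_closure hyU⟩, fun h => hxU (h ▸ hyU)⟩
end

section
/- Let (α_i)_{i≥1} be a purely periodic sequence of nonnegative integers with period k (so α_{i+k} = α_i for all i), satisfying α_{j+1} α_{j+2} … ≤ α_1 α_2 … lexicographically for all j ≥ 1 and (α_1 − α_{j+1})(α_1 − α_{j+2}) … < α_1 α_2 … lexicographically for all j ≥ 1. Suppose m ≥ k is an integer such that (α_1 − α_{j+1}) … (α_1 − α_m) < α_1 … α_{m−j} lexicographically (as finite words) for all 0 ≤ j < m, and let N be a positive integer with kN ≥ m. Then the sequence (γ_i) = (α_1 … α_k)^N (α_1 … α_m (α_1 − α_1)(α_1 − α_2) … (α_1 − α_m))^∞, i.e., N copies of the word α_1…α_k followed by the periodic repetition of the word α_1 … α_m (α_1 − α_1) … (α_1 − α_m), satisfies both γ_{j+1} γ_{j+2} … < γ_1 γ_2 … and (γ_1 − γ_{j+1})(γ_1 − γ_{j+2}) … < γ_1 γ_2 … lexicographically for all j ≥ 1.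 -/
/-!
Write `a = α 0`, `L = k N` and `σ^j` for the shift by `j`. The sequence `γ` agrees with `α` on its
first `L + m` places, and from place `L` on, `γ (x + m) = a - γ x`. Hence for `j ≥ L + m` the two
conditions at `j` are the two conditions at `j - m`, exchanged, and only the shifts `j < L + m`
remain. For those, both conditions are read off from the hypotheses on `α`, except when `σ^j α`
does not drop below `α` before place `p = L + m - j`. Then `σ^j γ` agrees with `γ` up to `p` and
continues with the complement `a - α`, which lies below `σ^p α` with a first difference inside the
region where `γ = α`: within one period `k ≤ m` if `p < L` (by `h2` and periodicity), within the
word of `hword` if `p ≥ L`.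
-/

open Function

def LexLTAt (n : ℕ) (a b : ℕ → ℕ) : Prop := (∀ i < n, a i = b i) ∧ a n < b n

namespace LexLTAt

variable {n p c : ℕ} {a b a' b' : ℕ → ℕ}

theorem lexLT (h : LexLTAt n a b) : LexLT a b := ⟨n, h⟩

theorem congr (h : LexLTAt n a b) (ha : ∀ i ≤ n, a' i = a i) (hb : ∀ i ≤ n, b' i = b i) :
    LexLTAt n a' b' :=
  ⟨fun i hi => by rw [ha i hi.le, hb i hi.le, h.1 i hi], by
    rw [ha n le_rfl, hb n le_rfl]; exact h.2⟩

theorem of_shift (h : LexLTAt n (fun i => a (p + i)) (fun i => b (p + i)))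
    (hab : ∀ i < p, a i = b i) : LexLTAt (p + n) a b := by
  refine ⟨fun i hi => ?_, h.2⟩
  rcases lt_or_ge i p with hip | hpi
  · exact hab i hip
  · obtain ⟨d, rfl⟩ := Nat.exists_eq_add_of_le hpi
    exact h.1 d (by omega)

theorem compl_swap (ha : ∀ i, a i ≤ c) (hb : ∀ i, b i ≤ c)
    (h : LexLTAt n (fun i => c - a i) b) : LexLTAt n (fun i => c - b i) a := by
  obtain ⟨heq, hlt⟩ := h
  refine ⟨fun i hi => ?_, ?_⟩
  · have := heq i hi
    have := ha i
    dsimp only at *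
    omega
  · have := ha n
    have := hb n
    dsimp only at *
    omega

end LexLTAt

theorem LexLT.exists_lexLTAt_lt_of_periodic {a b : ℕ → ℕ} {k : ℕ} (h : LexLT a b)
    (ha : Periodic a k) (hb : Periodic b k) (hk : 0 < k) : ∃ n < k, LexLTAt n a b := by
  obtain ⟨n, hn⟩ := h
  refine ⟨n, ?_, hn⟩
  by_contra! hkn
  have hlt := hn.2
  rw [← ha.map_mod_nat, ← hb.map_mod_nat, hn.1 _ ((Nat.mod_lt n hk).trans_le hkn)] at hlt
  exact hlt.false

theorem LexLE.exists_lexLTAt_lt_or_eqOn {a b : ℕ → ℕ} (h : LexLE a b) (p : ℕ) :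
    (∃ n < p, LexLTAt n a b) ∨ ∀ i < p, a i = b i := by
  rcases h with ⟨n, hn⟩ | rfl
  · by_cases hnp : n < p
    · exact Or.inl ⟨n, hnp, hn⟩
    · exact Or.inr fun i hi => hn.1 i (by omega)
  · exact Or.inr fun _ _ => rfl

theorem le_apply_zero_of_shift_lexLE {α : ℕ → ℕ}
    (h : ∀ j, 1 ≤ j → LexLE (fun i => α (i + j)) α) (i : ℕ) : α i ≤ α 0 := by
  rcases Nat.eq_zero_or_pos i with rfl | hi
  · exact le_rfl
  rcases h i hi with ⟨n, hn⟩ | heq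
  · rcases Nat.eq_zero_or_pos n with rfl | hn0
    · simpa using hn.2.le
    · simpa using (hn.1 0 hn0).le
  · simpa using (congrFun heq 0).le

theorem exists_lexLTAt_compl_shift {α : ℕ → ℕ} {k L m : ℕ} (hk : 0 < k)
    (hper : Periodic α k) (hkm : k ≤ m) (hαL : Periodic α L)
    (h2 : ∀ j : ℕ, 1 ≤ j → LexLT (fun i => α 0 - α (i + j)) α)
    (hword : ∀ j < m, WordLT (m - j) (fun i => α 0 - α (j + i)) α)
    {p : ℕ} (hp : 1 ≤ p) (hpLm : p < L + m) :
    ∃ n < m, p + n < L + m ∧ LexLTAt n (fun i => α 0 - α (i + p)) α := by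
  rcases lt_or_ge p L with hpL | hLp
  · have hcompl : Periodic (fun i => α 0 - α (i + p)) k := fun i => by
      simp only [add_right_comm i k p, hper (i + p)]
    obtain ⟨n, hnk, hn⟩ := (h2 p hp).exists_lexLTAt_lt_of_periodic hcompl hper hk
    exact ⟨n, by omega, by omega, hn⟩
  · obtain ⟨n, hn, hn'⟩ := hword (p - L) (by omega)
    refine ⟨n, by omega, by omega, LexLTAt.congr hn' (fun i _ => ?_) fun _ _ => rfl⟩
    rw [show i + p = p - L + i + L by omega, hαL]

/-- `(α 0 … α (k-1))^N (α 0 … α (m-1) (α 0 - α 0) … (α 0 - α (m-1)))^∞` -/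
def constructedSeq (α : ℕ → ℕ) (k m N : ℕ) (i : ℕ) : ℕ :=
  if i < k * N then α (i % k)
  else if (i - k * N) % (2 * m) < m then α ((i - k * N) % (2 * m))
  else α 0 - α ((i - k * N) % (2 * m) - m)

section constructedSeq

variable {α : ℕ → ℕ} {k m N : ℕ}

theorem constructedSeq_of_lt (hper : Periodic α k) {i : ℕ} (hi : i < k * N + m) :
    constructedSeq α k m N i = α i := by
  unfold constructedSeq
  split_ifs with hiL hmod
  · exact hper.map_mod_nat i
  · have hperL : Periodic α (k * N) := mul_comm N k ▸ hper.nsmul N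
    rw [Nat.mod_eq_of_lt (by omega), ← hperL, Nat.sub_add_cancel (by omega)]
  · rw [Nat.mod_eq_of_lt (by omega)] at hmod
    omega

theorem constructedSeq_add (hm : 0 < m) (hαle : ∀ i, α i ≤ α 0) {x : ℕ}
    (hx : k * N ≤ x) :
    constructedSeq α k m N (x + m) = α 0 - constructedSeq α k m N x := by
  unfold constructedSeq
  rw [if_neg (show ¬x + m < k * N by omega), if_neg (show ¬x < k * N by omega),
    show x + m - k * N = x - k * N + m by omega]
  set r := (x - k * N) % (2 * m) with hr
  have hr2m : r < 2 * m := Nat.mod_lt _ (by omega)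
  have hmod : (x - k * N + m) % (2 * m) = (r + m) % (2 * m) := by
    rw [Nat.add_mod, ← hr, Nat.mod_eq_of_lt (show m < 2 * m by omega)]
  rw [hmod]
  rcases lt_or_ge r m with hrm | hmr
  · rw [Nat.mod_eq_of_lt (by omega), if_neg (by omega), if_pos hrm, Nat.add_sub_cancel]
  · rw [Nat.mod_eq_sub_mod (by omega), Nat.mod_eq_of_lt (by omega), if_pos (by omega),
      if_neg (by omega), show r + m - 2 * m = r - m by omega]
    have := hαle (r - m)
    omega

end constructedSeq

section ComplementTail

variable {α γ : ℕ → ℕ} {L m : ℕ}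

theorem le_apply_zero_of_complement_tail (hαle : ∀ i, α i ≤ α 0)
    (hγα : ∀ i < L + m, γ i = α i) (hγc : ∀ x, L ≤ x → γ (x + m) = α 0 - γ x)
    (x : ℕ) : γ x ≤ α 0 := by
  rcases lt_or_ge x (L + m) with hx | hx
  · exact hγα x hx ▸ hαle x
  · rw [show x = x - m + m by omega, hγc _ (by omega)]
    exact Nat.sub_le _ _

theorem shift_lexLT_of_complement_tail (hαle : ∀ i, α i ≤ α 0) (hαL : Periodic α L)
    (h1 : ∀ j : ℕ, 1 ≤ j → LexLE (fun i => α (i + j)) α)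
    (hC : ∀ p, 1 ≤ p → p < L + m →
      ∃ n < m, p + n < L + m ∧ LexLTAt n (fun i => α 0 - α (i + p)) α)
    (hγα : ∀ i < L + m, γ i = α i) (hγc : ∀ x, L ≤ x → γ (x + m) = α 0 - γ x)
    {j : ℕ} (hj : 1 ≤ j) (hjLm : j < L + m) :
    LexLT (fun i => γ (i + j)) γ := by
  set p := L + m - j
  rcases (h1 j hj).exists_lexLTAt_lt_or_eqOn p with ⟨n, hnp, hn⟩ | heq
  · exact (hn.congr (fun i _ => hγα _ (by omega)) fun i _ => hγα _ (by omega)).lexLT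
  obtain ⟨n, hnm, hpn, hn⟩ := hC p (by omega) (by omega)
  have hn' := hn.compl_swap (fun i => hαle (i + p)) hαle
  refine (LexLTAt.of_shift (p := p) (hn'.congr (fun i _ => ?_) fun i _ => ?_)
    fun i hi => ?_).lexLT
  · rw [show p + i + j = L + i + m by omega, hγc _ (by omega), hγα _ (by omega), add_comm, hαL]
  · rw [hγα _ (by omega), add_comm]
  · rw [hγα _ (by omega), hγα _ (by omega)]
    exact heq i hi

theorem compl_shift_lexLT_of_complement_tail
    (hC : ∀ p, 1 ≤ p → p < L + m →
      ∃ n < m, p + n < L + m ∧ LexLTAt n (fun i => α 0 - α (i + p)) α)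
    (hγα : ∀ i < L + m, γ i = α i) {j : ℕ} (hj : 1 ≤ j) (hjLm : j < L + m) :
    LexLT (fun i => γ 0 - γ (i + j)) γ := by
  obtain ⟨n, -, hjn, hn⟩ := hC j hj hjLm
  refine (hn.congr (fun i _ => ?_) fun i _ => hγα _ (by omega)).lexLT
  rw [hγα 0 (by omega), hγα _ (by omega)]

theorem shift_lexLT_and_compl_shift_lexLT_of_complement_tail (hL : 0 < L) (hm : 0 < m)
    (hαle : ∀ i, α i ≤ α 0) (hαL : Periodic α L)
    (h1 : ∀ j : ℕ, 1 ≤ j → LexLE (fun i => α (i + j)) α)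
    (hC : ∀ p, 1 ≤ p → p < L + m →
      ∃ n < m, p + n < L + m ∧ LexLTAt n (fun i => α 0 - α (i + p)) α)
    (hγα : ∀ i < L + m, γ i = α i) (hγc : ∀ x, L ≤ x → γ (x + m) = α 0 - γ x) :
    ∀ j : ℕ, 1 ≤ j →
      LexLT (fun i => γ (i + j)) γ ∧ LexLT (fun i => γ 0 - γ (i + j)) γ := by
  intro j
  induction j using Nat.strong_induction_on with
  | _ j ih =>
  intro hj
  rcases lt_or_ge j (L + m) with hjLm | hLmj
  · exact ⟨shift_lexLT_of_complement_tail hαle hαL h1 hC hγα hγc hj hjLm,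
      compl_shift_lexLT_of_complement_tail hC hγα hj hjLm⟩
  obtain ⟨hshift, hcompl⟩ := ih (j - m) (by omega) (by omega)
  have hγ0 : γ 0 = α 0 := hγα 0 (by omega)
  have hcompl_eq : (fun i => γ 0 - γ (i + (j - m))) = fun i => γ (i + j) := funext fun i => by
    rw [hγ0, ← hγc _ (by omega), show i + (j - m) + m = i + j by omega]
  have hshift_eq : (fun i => γ (i + (j - m))) = fun i => γ 0 - γ (i + j) := funext fun i => by
    have := le_apply_zero_of_complement_tail hαle hγα hγc (i + (j - m))
    have : γ 0 - γ (i + (j - m)) = γ (i + j) := congrFun hcompl_eq i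
    omega
  exact ⟨hcompl_eq ▸ hcompl, hshift_eq ▸ hshift⟩

end ComplementTail

theorem constructed_sequence_univoque_general (α : ℕ → ℕ) (k : ℕ) (hk : 1 ≤ k)
    (hper : ∀ i, α (i + k) = α i)
    (h1 : ∀ j : ℕ, 1 ≤ j → LexLE (fun i => α (i + j)) α)
    (h2 : ∀ j : ℕ, 1 ≤ j → LexLT (fun i => α 0 - α (i + j)) α)
    (m : ℕ) (hm : k ≤ m)
    (hword : ∀ j < m, WordLT (m - j) (fun i => α 0 - α (j + i)) α)
    (N : ℕ) (hN : 1 ≤ N)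
    (γ : ℕ → ℕ)
    (hγ : ∀ i : ℕ, γ i =
      if i < k * N then α (i % k)
      else if (i - k * N) % (2 * m) < m then α ((i - k * N) % (2 * m))
      else α 0 - α ((i - k * N) % (2 * m) - m)) :
    ∀ j : ℕ, 1 ≤ j →
      LexLT (fun i => γ (i + j)) γ ∧ LexLT (fun i => γ 0 - γ (i + j)) γ := by
  obtain rfl : γ = constructedSeq α k m N := funext hγ
  have hαle : ∀ i, α i ≤ α 0 := le_apply_zero_of_shift_lexLE h1
  have hperL : Periodic α (k * N) := mul_comm N k ▸ Periodic.nsmul hper N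
  exact shift_lexLT_and_compl_shift_lexLT_of_complement_tail (Nat.mul_pos hk hN) (by omega)
    hαle hperL h1 (fun p hp hpLm => exists_lexLTAt_compl_shift hk hper hm hperL h2 hword hp hpLm)
    (fun i hi => constructedSeq_of_lt hper hi) fun x hx => constructedSeq_add (by omega) hαle hx

/-- The constructed sequence
`(γ_i) = (α_1…α_k)^N (α_1…α_m (α_1-α_1)…(α_1-α_m))^∞`
satisfies the univoque conditions (21) and (22). -/
theorem constructed_sequence_univoque (α : ℕ → ℕ) (k : ℕ) (hk : 1 ≤ k)
    (hper : ∀ i, α (i + k) = α i)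
    (h1 : ∀ j : ℕ, 1 ≤ j → LexLE (fun i => α (i + j)) α)
    (h2 : ∀ j : ℕ, 1 ≤ j → LexLT (fun i => α 0 - α (i + j)) α)
    (m : ℕ) (hm : k ≤ m)
    (hword : ∀ j < m, WordLT (m - j) (fun i => α 0 - α (j + i)) α)
    (N : ℕ) (hN : 1 ≤ N) (hkN : m ≤ k * N)
    (γ : ℕ → ℕ)
    (hγ : ∀ i : ℕ, γ i =
      if i < k * N then α (i % k)
      else if (i - k * N) % (2 * m) < m then α ((i - k * N) % (2 * m))
      else α 0 - α ((i - k * N) % (2 * m) - m)) :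
    ∀ j : ℕ, 1 ≤ j →
      LexLT (fun i => γ (i + j)) γ ∧ LexLT (fun i => γ 0 - γ (i + j)) γ :=
  constructed_sequence_univoque_general α k hk hper h1 h2 m hm hword N hN γ hγ
end

section
/- Let q be an element of the closure of 𝒰 not belonging to 𝒰, with quasi-greedy q-expansion (α_i) = (α_1 … α_k)^∞ purely periodic with period k, and let m ≥ k be an integer satisfying (α_1 − α_{j+1}) … (α_1 − α_m) < α_1 … α_{m−j} lexicographically for all 0 ≤ j < m. For each positive integer N with kN ≥ m, let q_N > 1 be the unique real number satisfying ∑_{i=1}^∞ γ_i^N q_N^{-i} = 1, where (γ_i^N) = (α_1 … α_k)^N (α_1 … α_m (α_1 − α_1) … (α_1 − α_m))^∞. Then q_N → q as N → ∞. -/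
/-!
Since `α` is periodic with period `k`, the sequence `γ^N` agrees with `α` on its first `kN`
digits, and all these digits are at most `α₁`. Some `α_i` is nonzero (otherwise `γ^N = 0` could
not represent `1`), so `q > 1` and the quasi-greedy expansion satisfies `∑ α_i q^{-i} = 1`.
By dominated convergence, for every fixed `x > 1` the value `∑ γ_i^N x^{-i}` tends to
`∑ α_i x^{-i}`, which is `> 1` for `x < q` and `< 1` for `x > q`. As `x ↦ ∑ γ_i^N x^{-i}` is
decreasing and equals `1` at `q_N`, eventually `q_N` lies on the correct side of every such `x`.
-/

open Filter Topology

/-- The paper's `∑_{i≥1} c_i x^{-i}`, with digits indexed from `0`. -/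
noncomputable def expansionValue (x : ℝ) (c : ℕ → ℕ) : ℝ :=
  ∑' i, (c i : ℝ) / x ^ (i + 1)

section ExpansionValue

variable {x y : ℝ} {M : ℕ} {c : ℕ → ℕ}

lemma summable_digit_div_pow (hx : 1 < x) (hc : ∀ i, c i ≤ M) :
    Summable fun i => (c i : ℝ) / x ^ (i + 1) := by
  have hx0 : 0 < x := by linarith
  have hgeom : Summable fun i : ℕ => (M : ℝ) * (x⁻¹) ^ i :=
    (summable_geometric_of_lt_one (by positivity) (inv_lt_one_of_one_lt₀ hx)).mul_left _
  refine hgeom.of_nonneg_of_le (fun i => by positivity) fun i => ?_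
  calc (c i : ℝ) / x ^ (i + 1) ≤ M / x ^ i := by
        gcongr
        · exact_mod_cast hc i
        · exact hx.le
        · omega
    _ = M * (x⁻¹) ^ i := by rw [inv_pow, div_eq_mul_inv]

lemma expansionValue_le_expansionValue (hx : 1 < x) (hxy : x ≤ y) (hc : ∀ i, c i ≤ M) :
    expansionValue y c ≤ expansionValue x c := by
  have hx0 : 0 < x := by linarith
  refine (summable_digit_div_pow (hx.trans_le hxy) hc).tsum_le_tsum (fun i => ?_)
    (summable_digit_div_pow hx hc)
  gcongr

lemma expansionValue_lt_expansionValue (hx : 1 < x) (hxy : x < y) (hc : ∀ i, c i ≤ M)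
    {i : ℕ} (hi : c i ≠ 0) : expansionValue y c < expansionValue x c := by
  have hx0 : 0 < x := by linarith
  refine (summable_digit_div_pow (hx.trans hxy) hc).tsum_lt_tsum (i := i) (fun j => ?_) ?_
    (summable_digit_div_pow hx hc)
  · gcongr
  · have : (0 : ℝ) < c i := by exact_mod_cast Nat.pos_of_ne_zero hi
    gcongr

lemma tendsto_expansionValue {ι : Type*} {l : Filter ι} {C : ι → ℕ → ℕ} (hx : 1 < x)
    (hC : ∀ N i, C N i ≤ M) (hCc : ∀ i, ∀ᶠ N in l, C N i = c i) :
    Tendsto (fun N => expansionValue x (C N)) l (𝓝 (expansionValue x c)) := by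
  have hx0 : 0 < x := by linarith
  refine tendsto_tsum_of_dominated_convergence (bound := fun i => (M : ℝ) / x ^ (i + 1))
    (summable_digit_div_pow (c := fun _ => M) hx fun _ => le_rfl) (fun i => ?_)
    (Eventually.of_forall fun N i => ?_)
  · exact tendsto_const_nhds.congr' ((hCc i).mono fun N h => by simp only [h])
  · rw [Real.norm_of_nonneg (by positivity)]
    gcongr
    exact_mod_cast hC N i

lemma tendsto_of_expansionValue_eq_one {ι : Type*} {l : Filter ι} {C : ι → ℕ → ℕ}
    {q : ℝ} {Q : ι → ℝ} (hq : 1 < q) (hc : ∀ i, c i ≤ M) (hC : ∀ N i, C N i ≤ M)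
    (hCc : ∀ i, ∀ᶠ N in l, C N i = c i) (hcq : expansionValue q c = 1)
    (hQ : ∀ᶠ N in l, 1 < Q N ∧ expansionValue (Q N) (C N) = 1) :
    Tendsto Q l (𝓝 q) := by
  obtain ⟨i, hi⟩ : ∃ i, c i ≠ 0 := by
    by_contra! h
    simp [expansionValue, h] at hcq
  refine tendsto_order.2 ⟨fun a ha => ?_, fun b hb => ?_⟩
  · set x := max a ((1 + q) / 2)
    have hx : 1 < x := lt_max_of_lt_right (by linarith)
    have hxq : x < q := max_lt ha (by linarith)
    have hcx : 1 < expansionValue x c := hcq ▸ expansionValue_lt_expansionValue hx hxq hc hi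
    filter_upwards [(tendsto_expansionValue hx hC hCc).eventually (lt_mem_nhds hcx), hQ]
      with N hNx ⟨hQN, hNQ⟩
    refine (le_max_left a ((1 + q) / 2)).trans_lt (lt_of_not_ge fun hle => ?_)
    linarith [expansionValue_le_expansionValue hQN hle (hC N)]
  · have hcb : expansionValue b c < 1 := hcq ▸ expansionValue_lt_expansionValue hq hb hc hi
    filter_upwards [(tendsto_expansionValue (hq.trans hb) hC hCc).eventually (gt_mem_nhds hcb),
      hQ] with N hNb hNQ
    refine lt_of_not_ge fun hle => ?_
    linarith [hNQ.2, expansionValue_le_expansionValue (hq.trans hb) hle (hC N)]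

end ExpansionValue

namespace IsQuasiGreedy

variable {q : ℝ} {α : ℕ → ℕ}

lemma sum_range_add_lt_one (hα : IsQuasiGreedy q α) (n : ℕ) :
    ∑ i ∈ Finset.range n, (α i : ℝ) / q ^ (i + 1) + (α n : ℝ) / q ^ (n + 1) < 1 :=
  (hα n).1

lemma one_le_sum_range_add_succ (hα : IsQuasiGreedy q α) (n : ℕ) :
    1 ≤ ∑ i ∈ Finset.range n, (α i : ℝ) / q ^ (i + 1) + ((α n : ℝ) + 1) / q ^ (n + 1) := by
  by_contra! h
  have : α n + 1 ≤ α n := (hα n).2 (by rw [Set.mem_ofPred_eq]; push_cast; exact h)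
  omega

lemma pos (hα : IsQuasiGreedy q α) : 0 < q := by
  by_contra! hq
  have h := hα.one_le_sum_range_add_succ 0
  simp only [Finset.range_zero, Finset.sum_empty, zero_add, pow_one] at h
  linarith [div_nonpos_of_nonneg_of_nonpos (by positivity : (0 : ℝ) ≤ α 0 + 1) hq]

lemma one_le_sum_range_add_one_div_pow (hα : IsQuasiGreedy q α) (n : ℕ) :
    1 ≤ ∑ i ∈ Finset.range n, (α i : ℝ) / q ^ (i + 1) + 1 / q ^ n := by
  cases n with
  | zero => simp
  | succ n =>
    rw [Finset.sum_range_succ]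
    linarith [hα.one_le_sum_range_add_succ n, add_div (α n : ℝ) 1 (q ^ (n + 1))]

lemma apply_lt (hα : IsQuasiGreedy q α) (n : ℕ) : (α n : ℝ) < q := by
  have hq := hα.pos
  have h : (α n : ℝ) / q ^ (n + 1) < 1 / q ^ n := by
    linarith [hα.sum_range_add_lt_one n, hα.one_le_sum_range_add_one_div_pow n]
  rw [div_lt_div_iff₀ (by positivity) (by positivity), one_mul, pow_succ, mul_comm] at h
  exact lt_of_mul_lt_mul_left h (by positivity)

lemma apply_le_apply_zero (hα : IsQuasiGreedy q α) (n : ℕ) : α n ≤ α 0 := by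
  have h := hα.one_le_sum_range_add_succ 0
  simp only [Finset.range_zero, Finset.sum_empty, zero_add, pow_one] at h
  rw [one_le_div hα.pos] at h
  exact Nat.lt_succ_iff.mp (by exact_mod_cast (hα.apply_lt n).trans_le h)

lemma one_lt (hα : IsQuasiGreedy q α) (h : ∃ i, α i ≠ 0) : 1 < q := by
  obtain ⟨i, hi⟩ := h
  have : 1 ≤ α 0 := (Nat.one_le_iff_ne_zero.mpr hi).trans (hα.apply_le_apply_zero i)
  exact lt_of_le_of_lt (by exact_mod_cast this) (hα.apply_lt 0)

lemma expansionValue_eq_one (hα : IsQuasiGreedy q α) (hq : 1 < q) :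
    expansionValue q α = 1 := by
  have hq0 : 0 < q := by linarith
  refine ((hasSum_iff_tendsto_nat_of_nonneg (fun i => by positivity) 1).2 ?_).tsum_eq
  have hlow : Tendsto (fun n : ℕ => 1 - 1 / q ^ n) atTop (𝓝 1) := by
    simpa only [one_div, sub_zero, Function.comp_def] using
      (tendsto_inv_atTop_zero.comp (tendsto_pow_atTop_atTop_of_one_lt hq)).const_sub 1
  refine tendsto_of_tendsto_of_tendsto_of_le_of_le hlow tendsto_const_nhds (fun n => ?_)
    fun n => ?_
  · linarith [hα.one_le_sum_range_add_one_div_pow n]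
  · cases n with
    | zero => simp
    | succ n => exact (Finset.sum_range_succ _ n).trans_le (hα.sum_range_add_lt_one n).le

end IsQuasiGreedy

theorem constructed_numbers_tendsto_general (q : ℝ)
    (α : ℕ → ℕ) (hα : IsQuasiGreedy q α)
    (k : ℕ) (hk : 1 ≤ k) (hper : ∀ i, α (i + k) = α i)
    (m : ℕ)
    (γ : ℕ → ℕ → ℕ)
    (hγ : ∀ N i : ℕ, γ N i =
      if i < k * N then α (i % k)
      else if (i - k * N) % (2 * m) < m then α ((i - k * N) % (2 * m))
      else α 0 - α ((i - k * N) % (2 * m) - m))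
    (Q : ℕ → ℝ)
    (hQ : ∀ N : ℕ, 1 ≤ N → m ≤ k * N →
      1 < Q N ∧ ∑' i : ℕ, (γ N i : ℝ) / (Q N) ^ (i + 1) = 1) :
    Filter.Tendsto Q Filter.atTop (nhds q) := by
  have hγle : ∀ N i, γ N i ≤ α 0 := fun N i => by
    rw [hγ]
    split_ifs <;> first | exact hα.apply_le_apply_zero _ | omega
  have hγα : ∀ N, ∀ i < k * N, γ N i = α i := fun N i hi => by
    rw [hγ, if_pos hi, Function.Periodic.map_mod_nat hper]
  have hQ' : ∀ᶠ N in atTop, 1 < Q N ∧ expansionValue (Q N) (γ N) = 1 :=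
    eventually_atTop.2 ⟨m + 1, fun N hN => hQ N (by omega)
      ((by omega : m ≤ N).trans (Nat.le_mul_of_pos_left N hk))⟩
  have hα_ne_zero : ∃ i, α i ≠ 0 := by
    obtain ⟨N, -, hN⟩ := hQ'.exists
    by_contra! h
    have hγN : ∀ i, γ N i = 0 := fun i => Nat.le_zero.mp (h 0 ▸ hγle N i)
    simp [expansionValue, hγN] at hN
  have hq := hα.one_lt hα_ne_zero
  refine tendsto_of_expansionValue_eq_one hq hα.apply_le_apply_zero hγle (fun i => ?_)
    (hα.expansionValue_eq_one hq) hQ'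
  filter_upwards [eventually_gt_atTop i] with N hN
  exact hγα N i (hN.trans_le (Nat.le_mul_of_pos_left N hk))

/-- The numbers `q_N` determined by the constructed sequences
`(γ_i^N) = (α_1…α_k)^N (α_1…α_m (α_1-α_1)…(α_1-α_m))^∞`
converge to `q` as `N → ∞`. -/
theorem constructed_numbers_tendsto (q : ℝ)
    (hq : q ∈ closure UnivoqueSet \ UnivoqueSet)
    (α : ℕ → ℕ) (hα : IsQuasiGreedy q α)
    (k : ℕ) (hk : 1 ≤ k) (hper : ∀ i, α (i + k) = α i)
    (m : ℕ) (hm : k ≤ m)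
    (hword : ∀ j < m, WordLT (m - j) (fun i => α 0 - α (j + i)) α)
    (γ : ℕ → ℕ → ℕ)
    (hγ : ∀ N i : ℕ, γ N i =
      if i < k * N then α (i % k)
      else if (i - k * N) % (2 * m) < m then α ((i - k * N) % (2 * m))
      else α 0 - α ((i - k * N) % (2 * m) - m))
    (Q : ℕ → ℝ)
    (hQ : ∀ N : ℕ, 1 ≤ N → m ≤ k * N →
      1 < Q N ∧ ∑' i : ℕ, (γ N i : ℝ) / (Q N) ^ (i + 1) = 1) :
    Filter.Tendsto Q Filter.atTop (nhds q) :=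
  constructed_numbers_tendsto_general q α hα k hk hper m γ hγ Q hQ
end

section
/- For every real number q > 1, the quasi-greedy q-expansion (α_i(q)) is the largest, in the lexicographical order, among all q-expansions that contain infinitely many nonzero terms. -/
/-- For `q > 1`, the quasi-greedy `q`-expansion is the lexicographically largest
among all `q`-expansions with infinitely many nonzero terms. -/
theorem quasiGreedy_largest_infinite_expansion (q : ℝ) (hq : 1 < q)
    (α : ℕ → ℕ) (hα : IsQuasiGreedy q α) :
    IsExpansion q α ∧ (∀ N : ℕ, ∃ n ≥ N, α n ≠ 0) ∧
      ∀ c : ℕ → ℕ, IsExpansion q c → (∀ N : ℕ, ∃ n ≥ N, c n ≠ 0) →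
        LexLE c α := by
  have hq0 : (0:ℝ) < q := lt_trans one_pos hq
  set S : ℕ → ℝ := fun n => ∑ i ∈ Finset.range n, (α i : ℝ) / q ^ (i + 1) with hSdef
  have hSsucc : ∀ n, S (n + 1) = S n + (α n : ℝ) / q ^ (n + 1) := fun n =>
    Finset.sum_range_succ _ _
  have h1 : ∀ n, S n + (α n : ℝ) / q ^ (n + 1) < 1 := fun n => (hα n).1
  have h2 : ∀ n, (1:ℝ) ≤ S n + ((α n : ℝ) + 1) / q ^ (n + 1) := by
    intro n
    by_contra h
    push_neg at h
    have hmem : (α n + 1) ∈ {k : ℕ |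
        (∑ i ∈ Finset.range n, (α i : ℝ) / q ^ (i + 1)) + (k : ℝ) / q ^ (n + 1) < 1} := by
      simp only [Set.mem_setOf_eq]
      push_cast
      exact h
    have := (hα n).2 hmem
    omega
  have hSlt : ∀ n, S n < 1 := by
    intro n
    cases n with
    | zero => simp [hSdef]
    | succ m => rw [hSsucc]; exact h1 m
  have hSge : ∀ n, 1 - 1 / q ^ n ≤ S n := by
    intro n
    cases n with
    | zero => simp [hSdef]
    | succ m =>
      have h := h2 m
      have hd : ((α m : ℝ) + 1) / q ^ (m + 1)
          = (α m : ℝ) / q ^ (m + 1) + 1 / q ^ (m + 1) := add_div _ _ _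
      rw [hSsucc]
      linarith [hSsucc m]
  have hdig : ∀ n, (α n : ℝ) ≤ q := by
    intro n
    have h := h1 n
    have hg := hSge n
    have hp : (0:ℝ) < q ^ (n + 1) := pow_pos hq0 _
    have hp' : (0:ℝ) < q ^ n := pow_pos hq0 _
    have hlt : (α n : ℝ) / q ^ (n + 1) < 1 / q ^ n := by linarith
    rw [div_lt_div_iff₀ hp hp'] at hlt
    have hpow : (1:ℝ) * q ^ (n + 1) = q * q ^ n := by ring
    nlinarith
  -- summability of α-series and tsum = 1
  have hpos : ∀ i, (0:ℝ) ≤ (α i : ℝ) / q ^ (i + 1) := fun i => by positivity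
  have hαsummable : Summable (fun i => (α i : ℝ) / q ^ (i + 1)) :=
    summable_of_sum_range_le hpos (fun n => (hSlt n).le)
  have hgeo : Filter.Tendsto (fun n : ℕ => 1 / q ^ n) Filter.atTop (nhds 0) := by
    have h := tendsto_pow_atTop_nhds_zero_of_lt_one
      (by positivity : (0:ℝ) ≤ 1 / q) (by rw [div_lt_one hq0]; exact hq)
    simpa [div_pow] using h
  have hStend : Filter.Tendsto S Filter.atTop (nhds 1) := by
    have hlow : Filter.Tendsto (fun n : ℕ => 1 - 1 / q ^ n) Filter.atTop (nhds 1) := by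
      simpa using (tendsto_const_nhds (x := (1:ℝ)).sub hgeo)
    exact tendsto_of_tendsto_of_tendsto_of_le_of_le hlow tendsto_const_nhds
      (fun n => hSge n) (fun n => (hSlt n).le)
  have hαtsum : ∑' i : ℕ, (α i : ℝ) / q ^ (i + 1) = 1 :=
    tendsto_nhds_unique hαsummable.hasSum.tendsto_sum_nat hStend
  refine ⟨⟨hdig, hαtsum⟩, ?_, ?_⟩
  · -- infinitely many nonzero terms
    intro N
    by_contra h
    push_neg at h
    have hconst : ∀ n ≥ N, S n = S N := by
      intro n hn
      induction n, hn using Nat.le_induction with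
      | base => rfl
      | succ m hm ih => rw [hSsucc, h m hm, ih]; simp
    have hSN : S N < 1 := hSlt N
    obtain ⟨n, hn1, hn2⟩ :=
      ((hgeo.eventually (gt_mem_nhds (by linarith : (0:ℝ) < 1 - S N))).and
        (Filter.eventually_ge_atTop N)).exists
    have := hSge n
    rw [hconst n hn2] at this
    linarith
  · -- lexicographic maximality
    intro c hc hcinf
    by_cases hce : c = α
    · exact Or.inr hce
    left
    have hex : ∃ n, c n ≠ α n := by
      by_contra h
      push_neg at h
      exact hce (funext h)
    obtain ⟨n, hne, heq⟩ : ∃ n, c n ≠ α n ∧ ∀ i < n, c i = α i :=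
      ⟨Nat.find hex, Nat.find_spec hex, fun i hi => not_not.1 (Nat.find_min hex hi)⟩
    rcases lt_or_gt_of_ne hne with hlt | hgt
    · exact ⟨n, heq, hlt⟩
    exfalso
    -- c is summable
    have hcsummable : Summable (fun i => (c i : ℝ) / q ^ (i + 1)) := by
      refine Summable.of_nonneg_of_le (fun i => by positivity) (fun i => ?_)
        (summable_geometric_of_lt_one (by positivity : (0:ℝ) ≤ 1 / q)
          (by rw [div_lt_one hq0]; exact hq))
      calc (c i : ℝ) / q ^ (i + 1) ≤ q / q ^ (i + 1) :=
            (div_le_div_iff_of_pos_right (pow_pos hq0 _)).2 (hc.1 i)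
        _ = (1 / q) ^ i := by
            rw [div_pow, one_pow, pow_succ]
            rw [eq_div_iff (by positivity)]
            field_simp
    -- split the sum for c at n+1
    have hsplit := Summable.sum_add_tsum_nat_add (n + 1) hcsummable
    rw [hc.2] at hsplit
    have hfront : (1:ℝ) ≤ ∑ i ∈ Finset.range (n + 1), (c i : ℝ) / q ^ (i + 1) := by
      rw [Finset.sum_range_succ]
      have hSeq : ∑ i ∈ Finset.range n, (c i : ℝ) / q ^ (i + 1) = S n :=
        Finset.sum_congr rfl (fun i hi => by rw [heq i (Finset.mem_range.1 hi)])
      rw [hSeq]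
      have hcge : ((α n : ℝ) + 1) ≤ (c n : ℝ) := by exact_mod_cast hgt
      have := h2 n
      have hp : (0:ℝ) < q ^ (n + 1) := pow_pos hq0 _
      have : ((α n : ℝ) + 1) / q ^ (n + 1) ≤ (c n : ℝ) / q ^ (n + 1) :=
        (div_le_div_iff_of_pos_right hp).2 hcge
      linarith [h2 n]
    have htail_nonneg : (0:ℝ) ≤ ∑' i : ℕ, (c (i + (n + 1)) : ℝ) / q ^ (i + (n + 1) + 1) :=
      tsum_nonneg (fun i => by positivity)
    have htail_zero : ∑' i : ℕ, (c (i + (n + 1)) : ℝ) / q ^ (i + (n + 1) + 1) = 0 := by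
      linarith
    have htsummable : Summable (fun i : ℕ => (c (i + (n + 1)) : ℝ) / q ^ (i + (n + 1) + 1)) :=
      (summable_nat_add_iff (f := fun i => (c i : ℝ) / q ^ (i + 1)) (n + 1)).2 hcsummable
    have hzero : ∀ i : ℕ, c (i + (n + 1)) = 0 := by
      intro i
      have hle : (c (i + (n + 1)) : ℝ) / q ^ (i + (n + 1) + 1)
          ≤ ∑' j : ℕ, (c (j + (n + 1)) : ℝ) / q ^ (j + (n + 1) + 1) :=
        Summable.le_tsum htsummable i (fun j _ => by positivity)
      have hge : (0:ℝ) ≤ (c (i + (n + 1)) : ℝ) / q ^ (i + (n + 1) + 1) := by positivity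
      have : (c (i + (n + 1)) : ℝ) / q ^ (i + (n + 1) + 1) = 0 := le_antisymm
        (htail_zero ▸ hle) hge
      have hp : (0:ℝ) < q ^ (i + (n + 1) + 1) := pow_pos hq0 _
      have := (div_eq_zero_iff.1 this).resolve_right (ne_of_gt hp)
      exact_mod_cast this
    obtain ⟨m, hm1, hm2⟩ := hcinf (n + 1)
    exact hm2 (by simpa [Nat.sub_add_cancel hm1] using hzero (m - (n + 1)))
end
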